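/- arXiv:2106.07255 — 3 statements merged into one kernel-verified Lean document; each statement's English description precedes it below -/
import Mathlib

section
/- Let W⁻ be a symmetric matrix with nonpositive entries and zero diagonal, and let u ∈ ℝ^n be a unit vector with entries sorted increasingly such that u₁² + uₙ² = 1. If t is a random variable on [u₁, uₙ] with density f(t) = 2|t| and S_t = {i : u_i ≤ t}, then E[∑_{i∈S_t, j∉S_t} W⁻_{ij}] ≤ (1/2)·∑_{i<j} W⁻_{ij}(u_i − u_j)². In particular, there exists a set S ⊂ V such that ∑_{i<j} W⁻_{ij}(u_i − u_j)² ≥ 2·∑_{i∈S, j∉S} W⁻_{ij}. -/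
open Matrix Finset

private lemma key_ineq' (c d : ℝ) (h : c ≤ d) : (d - c)^2 / 2 ≤ d * |d| - c * |c| := by
  rcases abs_cases c with ⟨hc, hc0⟩ | ⟨hc, hc0⟩ <;>
    rcases abs_cases d with ⟨hd, hd0⟩ | ⟨hd, hd0⟩ <;> rw [hc, hd] <;>
    nlinarith [sq_nonneg (c+d), sq_nonneg (c-d)]

private lemma tele' (f : ℕ → ℝ) : ∀ {m k : ℕ}, m ≤ k →
    ∑ i ∈ Finset.Ico m k, (f (i+1) - f i) = f k - f m := by
  intro m k h
  induction k with
  | zero => interval_cases m; simp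
  | succ k ih =>
    rcases Nat.lt_or_ge m (k+1) with h1 | h1
    · have hm : m ≤ k := by omega
      rw [Finset.sum_Ico_succ_top hm, ih hm]; ring
    · have : m = k + 1 := by omega
      subst this; simp

private lemma int_abs' (c d : ℝ) (h : c ≤ d) :
    (∫ t in c..d, 2 * |t|) = d * |d| - c * |c| := by
  have hint : ∀ p q : ℝ, IntervalIntegrable (fun t => 2 * |t|) MeasureTheory.volume p q :=
    fun p q => (continuous_const.mul continuous_abs).intervalIntegrable p q
  have hpos : ∀ p q : ℝ, 0 ≤ p → p ≤ q → (∫ t in p..q, 2 * |t|) = q * |q| - p * |p| := by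
    intro p q hp hpq
    have : (∫ t in p..q, 2 * |t|) = ∫ t in p..q, 2 * t := by
      apply intervalIntegral.integral_congr
      intro x hx
      rw [Set.uIcc_of_le hpq] at hx
      have : 0 ≤ x := le_trans hp hx.1
      simp [abs_of_nonneg this]
    rw [this, intervalIntegral.integral_const_mul, integral_id,
      abs_of_nonneg (le_trans hp hpq), abs_of_nonneg hp]
    ring
  have hneg : ∀ p q : ℝ, q ≤ 0 → p ≤ q → (∫ t in p..q, 2 * |t|) = q * |q| - p * |p| := by
    intro p q hq hpq
    have h0 : (∫ t in p..q, 2 * |t|) = ∫ t in p..q, 2 * (-t) := by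
      apply intervalIntegral.integral_congr
      intro x hx
      rw [Set.uIcc_of_le hpq] at hx
      have : x ≤ 0 := le_trans hx.2 hq
      simp [abs_of_nonpos this]
    have h2 : (∫ t in p..q, 2 * (-t)) = -2 * ((q^2 - p^2)/2) := by
      have h3 : (fun t : ℝ => 2 * (-t)) = fun t : ℝ => (-2) * t := by funext t; ring
      rw [h3, intervalIntegral.integral_const_mul, integral_id]
    rw [h0, h2, abs_of_nonpos hq, abs_of_nonpos (le_trans hpq hq)]
    ring
  rcases le_or_gt 0 c with hc | hc
  · exact hpos c d hc h
  rcases le_or_gt d 0 with hd | hd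
  · exact hneg c d hd h
  · rw [← intervalIntegral.integral_add_adjacent_intervals (hint c 0) (hint 0 d),
      hneg c 0 le_rfl hc.le, hpos 0 d le_rfl hd.le]
    ring

private lemma ind_int' (W a b c d : ℝ) (hab : a ≤ b) (hac : a ≤ c) (hcd : c ≤ d) (hdb : d ≤ b) :
    (∫ t in a..b, Set.indicator (Set.Ico c d) (fun t => W * (2 * |t|)) t)
      = W * (d * |d| - c * |c|) := by
  have hae : ∀ᵐ t : ℝ, t ≠ c ∧ t ≠ d := by
    filter_upwards [MeasureTheory.compl_mem_ae_iff.2 (MeasureTheory.measure_singleton c),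
      MeasureTheory.compl_mem_ae_iff.2 (MeasureTheory.measure_singleton d)] with t h1 h2
    exact ⟨h1, h2⟩
  have h1 : (∫ t in a..b, Set.indicator (Set.Ico c d) (fun t => W * (2 * |t|)) t)
      = ∫ t in a..b, Set.indicator (Set.Ioc c d) (fun t => W * (2 * |t|)) t := by
    apply intervalIntegral.integral_congr_ae
    filter_upwards [hae] with t ⟨h1, h2⟩ _
    simp only [Set.indicator_apply, Set.mem_Ico, Set.mem_Ioc]
    have : (c ≤ t ∧ t < d) ↔ (c < t ∧ t ≤ d) := by
      constructor
      · rintro ⟨x, y⟩; exact ⟨lt_of_le_of_ne x (Ne.symm h1), y.le⟩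
      · rintro ⟨x, y⟩; exact ⟨x.le, lt_of_le_of_ne y h2⟩
    rw [if_congr this rfl rfl]
  rw [h1, intervalIntegral.integral_of_le hab,
    MeasureTheory.integral_indicator measurableSet_Ioc,
    MeasureTheory.Measure.restrict_restrict measurableSet_Ioc,
    Set.inter_eq_left.mpr (Set.Ioc_subset_Ioc hac hdb),
    ← intervalIntegral.integral_of_le hcd, intervalIntegral.integral_const_mul,
    int_abs' c d hcd]

theorem negative_part_cheeger_sweep_cut
    (n : ℕ) (Wm : Matrix (Fin (n+1)) (Fin (n+1)) ℝ)
    (hsymm : Wm.IsSymm) (hnonpos : ∀ i j, Wm i j ≤ 0) (hdiag : ∀ i, Wm i i = 0)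
    (u : Fin (n+1) → ℝ) (hunit : u ⬝ᵥ u = 1) (hsorted : Monotone u)
    (hends : (u 0)^2 + (u (Fin.last n))^2 = 1) :
    (∫ t in (u 0)..(u (Fin.last n)),
        (∑ i : Fin (n+1), ∑ j : Fin (n+1),
          if u i ≤ t ∧ ¬ u j ≤ t then Wm i j else 0) * (2 * |t|))
      ≤ (1/2) * ∑ i : Fin (n+1), ∑ j : Fin (n+1),
          (if i < j then Wm i j * (u i - u j)^2 else 0) ∧
    ∃ S : Finset (Fin (n+1)),
      (∑ i : Fin (n+1), ∑ j : Fin (n+1), if i < j then Wm i j * (u i - u j)^2 else 0)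
        ≥ 2 * ∑ i ∈ S, ∑ j ∈ Sᶜ, Wm i j := by
  have hab : u 0 ≤ u (Fin.last n) := hsorted (Fin.zero_le _)
  have hlo : ∀ i, u 0 ≤ u i := fun i => hsorted (Fin.zero_le i)
  have hhi : ∀ i, u i ≤ u (Fin.last n) := fun i => hsorted (Fin.le_last i)
  have hij_of : ∀ i j : Fin (n+1), u i < u j → i < j := by
    intro i j h
    by_contra hc
    exact absurd (hsorted (le_of_not_gt hc)) (not_le.mpr h)
  constructor
  · -- Part 1
    have hrw : ∀ t : ℝ, (∑ i : Fin (n+1), ∑ j : Fin (n+1),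
          if u i ≤ t ∧ ¬ u j ≤ t then Wm i j else 0) * (2 * |t|)
        = ∑ i : Fin (n+1), ∑ j : Fin (n+1),
          Set.indicator (Set.Ico (u i) (u j)) (fun s => Wm i j * (2 * |s|)) t := by
      intro t
      rw [Finset.sum_mul]
      refine Finset.sum_congr rfl fun i _ => ?_
      rw [Finset.sum_mul]
      refine Finset.sum_congr rfl fun j _ => ?_
      by_cases h : u i ≤ t ∧ t < u j
      · rw [if_pos ⟨h.1, not_le.mpr h.2⟩]
        exact (Set.indicator_of_mem (Set.mem_Ico.mpr h) (fun s => Wm i j * (2 * |s|))).symm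
      · have hnot : t ∉ Set.Ico (u i) (u j) := by simpa [Set.mem_Ico] using h
        rw [if_neg (by simpa [not_le] using h),
          Set.indicator_of_notMem hnot (fun s => Wm i j * (2 * |s|)), zero_mul]
    have hint : ∀ i j : Fin (n+1), IntervalIntegrable
        (fun t => Set.indicator (Set.Ico (u i) (u j)) (fun s => Wm i j * (2 * |s|)) t)
        MeasureTheory.volume (u 0) (u (Fin.last n)) := by
      intro i j
      have hc : Continuous fun s : ℝ => Wm i j * (2 * |s|) :=
        continuous_const.mul (continuous_const.mul continuous_abs)
      have h1 := hc.intervalIntegrable (μ := MeasureTheory.volume) (u 0) (u (Fin.last n))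
      exact ⟨h1.1.indicator measurableSet_Ico, h1.2.indicator measurableSet_Ico⟩
    have hsplit : (∫ t in (u 0)..(u (Fin.last n)),
        (∑ i : Fin (n+1), ∑ j : Fin (n+1),
          if u i ≤ t ∧ ¬ u j ≤ t then Wm i j else 0) * (2 * |t|))
        = ∑ i : Fin (n+1), ∑ j : Fin (n+1),
          ∫ t in (u 0)..(u (Fin.last n)),
            Set.indicator (Set.Ico (u i) (u j)) (fun s => Wm i j * (2 * |s|)) t := by
      refine (intervalIntegral.integral_congr (fun t _ => hrw t)).trans ?_
      have hinner : ∀ i : Fin (n+1), IntervalIntegrable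
          (fun t => ∑ j : Fin (n+1),
            Set.indicator (Set.Ico (u i) (u j)) (fun s => Wm i j * (2 * |s|)) t)
          MeasureTheory.volume (u 0) (u (Fin.last n)) := by
        intro i
        have h := IntervalIntegrable.sum (μ := MeasureTheory.volume) univ
          (fun j _ => hint i j)
        rwa [Finset.sum_fn] at h
      refine (intervalIntegral.integral_finset_sum
        (f := fun (i : Fin (n+1)) (t : ℝ) => ∑ j : Fin (n+1),
          Set.indicator (Set.Ico (u i) (u j)) (fun s => Wm i j * (2 * |s|)) t)
        (fun i _ => hinner i)).trans ?_
      exact Finset.sum_congr rfl fun i _ =>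
        intervalIntegral.integral_finset_sum (fun j _ => hint i j)
    rw [hsplit, Finset.mul_sum]
    refine Finset.sum_le_sum fun i _ => ?_
    rw [Finset.mul_sum]
    refine Finset.sum_le_sum fun j _ => ?_
    rcases lt_or_ge (u i) (u j) with huv | huv
    · have hij : i < j := hij_of i j huv
      rw [ind_int' (Wm i j) _ _ _ _ hab (hlo i) huv.le (hhi j), if_pos hij]
      have hk := key_ineq' (u i) (u j) huv.le
      nlinarith [hnonpos i j]
    · have hempty : Set.Ico (u i) (u j) = ∅ := Set.Ico_eq_empty (not_lt.mpr huv)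
      rw [hempty]
      simp only [Set.indicator_empty, intervalIntegral.integral_zero]
      by_cases hij : i < j
      · have : u i = u j := le_antisymm (hsorted hij.le) huv
        rw [if_pos hij, this]
        simp
      · rw [if_neg hij]
        simp
  · -- Part 2
    rcases Nat.eq_zero_or_pos n with rfl | hn
    · exfalso
      simp [dotProduct, Fin.sum_univ_one] at hunit
      have h0 : Fin.last 0 = 0 := rfl
      rw [h0] at hends
      nlinarith
    · set v' : ℕ → ℝ := fun k => u ⟨min k n, by omega⟩ * |u ⟨min k n, by omega⟩| with hv'def
      have hv' : ∀ i : Fin (n+1), v' (i : ℕ) = u i * |u i| := by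
        intro i
        have hmin : min (i : ℕ) n = (i : ℕ) := Nat.min_eq_left (Nat.lt_succ_iff.mp i.isLt)
        simp only [hv'def, hmin, Fin.eta]
      have humono : ∀ p q : ℕ, p ≤ q →
          u ⟨min p n, by omega⟩ ≤ u ⟨min q n, by omega⟩ := by
        intro p q h
        exact hsorted (by simp [Fin.mk_le_mk]; omega)
      have hδ : ∀ k : ℕ, 0 ≤ v' (k+1) - v' k := by
        intro k
        have := key_ineq' (u ⟨min k n, by omega⟩) (u ⟨min (k+1) n, by omega⟩)
          (humono k (k+1) (by omega))
        have h2 : (0:ℝ) ≤ (u ⟨min (k+1) n, by omega⟩ - u ⟨min k n, by omega⟩)^2 / 2 := by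
          positivity
        simp only [hv'def]
        linarith
      set S : ℕ → Finset (Fin (n+1)) := fun k => univ.filter (fun i : Fin (n+1) => (i:ℕ) ≤ k)
        with hSdef
      set cut : ℕ → ℝ := fun k => ∑ i ∈ S k, ∑ j ∈ (S k)ᶜ, Wm i j with hcutdef
      set D : ℝ := ∑ i : Fin (n+1), ∑ j : Fin (n+1),
        if i < j then Wm i j * (v' (j:ℕ) - v' (i:ℕ)) else 0 with hDdef
      -- Step 1 : Q ≥ 2 D
      have hQD : (∑ i : Fin (n+1), ∑ j : Fin (n+1),
          if i < j then Wm i j * (u i - u j)^2 else 0) ≥ 2 * D := by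
        rw [hDdef, Finset.mul_sum, ge_iff_le]
        refine Finset.sum_le_sum fun i _ => ?_
        rw [Finset.mul_sum]
        refine Finset.sum_le_sum fun j _ => ?_
        by_cases hij : i < j
        · rw [if_pos hij, if_pos hij, hv' i, hv' j]
          have hle : u i ≤ u j := hsorted hij.le
          have hk := key_ineq' (u i) (u j) hle
          nlinarith [hnonpos i j]
        · rw [if_neg hij, if_neg hij, mul_zero]
      -- Step 2 : D = ∑ k, δ k * cut k
      have hD2 : D = ∑ k ∈ range n, (v' (k+1) - v' k) * cut k := by
        have hterm : ∀ i j : Fin (n+1),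
            (if i < j then Wm i j * (v' (j:ℕ) - v' (i:ℕ)) else 0)
            = ∑ k ∈ range n, if (i:ℕ) ≤ k ∧ k < (j:ℕ) then Wm i j * (v' (k+1) - v' k) else 0 := by
          intro i j
          by_cases hij : i < j
          · rw [if_pos hij]
            have hjn : (j:ℕ) ≤ n := Nat.lt_succ_iff.mp j.isLt
            have hfil : (range n).filter (fun k => (i:ℕ) ≤ k ∧ k < (j:ℕ))
                = Finset.Ico (i:ℕ) (j:ℕ) := by
              ext k
              simp only [Finset.mem_filter, Finset.mem_range, Finset.mem_Ico]
              omega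
            rw [← Finset.sum_filter, hfil, ← Finset.mul_sum,
              tele' v' (le_of_lt (Fin.lt_def.mp hij))]
          · rw [if_neg hij]
            refine (Finset.sum_eq_zero fun k _ => ?_).symm
            have : ¬ ((i:ℕ) ≤ k ∧ k < (j:ℕ)) := by
              have := Fin.le_def.mp (le_of_not_gt hij)
              omega
            rw [if_neg this]
        have hswap : ∀ k : ℕ, (∑ i : Fin (n+1), ∑ j : Fin (n+1),
            if (i:ℕ) ≤ k ∧ k < (j:ℕ) then Wm i j * (v' (k+1) - v' k) else 0)
            = (v' (k+1) - v' k) * cut k := by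
          intro k
          rw [hcutdef]
          simp only [hSdef, Finset.compl_filter, Finset.sum_filter, Finset.mul_sum]
          refine Finset.sum_congr rfl fun i _ => ?_
          by_cases hi : (i:ℕ) ≤ k
          · simp only [hi, if_true, true_and]
            rw [Finset.mul_sum]
            refine Finset.sum_congr rfl fun j _ => ?_
            by_cases hj : (j:ℕ) ≤ k
            · simp [hj, not_lt.mpr hj]
            · simp [hj, not_le.mp hj, mul_comm]
          · simp [hi]
        calc D = ∑ i : Fin (n+1), ∑ j : Fin (n+1), ∑ k ∈ range n,
              (if (i:ℕ) ≤ k ∧ k < (j:ℕ) then Wm i j * (v' (k+1) - v' k) else 0) := by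
              rw [hDdef]
              exact Finset.sum_congr rfl fun i _ => Finset.sum_congr rfl fun j _ => hterm i j
          _ = ∑ i : Fin (n+1), ∑ k ∈ range n, ∑ j : Fin (n+1),
              (if (i:ℕ) ≤ k ∧ k < (j:ℕ) then Wm i j * (v' (k+1) - v' k) else 0) :=
              Finset.sum_congr rfl fun i _ => Finset.sum_comm
          _ = ∑ k ∈ range n, ∑ i : Fin (n+1), ∑ j : Fin (n+1),
              (if (i:ℕ) ≤ k ∧ k < (j:ℕ) then Wm i j * (v' (k+1) - v' k) else 0) :=
              Finset.sum_comm
          _ = ∑ k ∈ range n, (v' (k+1) - v' k) * cut k :=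
              Finset.sum_congr rfl fun k _ => hswap k
      -- Step 3 : conclude
      have hcutle : ∀ k : ℕ, cut k ≤ 0 := fun k =>
        Finset.sum_nonpos fun i _ => Finset.sum_nonpos fun j _ => hnonpos i j
      obtain ⟨k0, hk0, hmin⟩ := Finset.exists_min_image (range n) cut
        ⟨0, Finset.mem_range.mpr hn⟩
      have hTsum : ∑ k ∈ range n, (v' (k+1) - v' k) = v' n - v' 0 := by
        rw [Finset.range_eq_Ico]
        exact tele' v' (Nat.zero_le n)
      have hvn : v' n = u (Fin.last n) * |u (Fin.last n)| := by
        have := hv' (Fin.last n)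
        rwa [Fin.val_last] at this
      have hv0 : v' 0 = u 0 * |u 0| := by
        have := hv' (0 : Fin (n+1))
        rwa [Fin.val_zero] at this
      have hT1 : v' n - v' 0 ≤ 1 := by
        rw [hvn, hv0]
        nlinarith [le_abs_self (u 0), le_abs_self (u (Fin.last n)),
          neg_abs_le (u 0), neg_abs_le (u (Fin.last n)),
          abs_nonneg (u 0), abs_nonneg (u (Fin.last n)),
          sq_abs (u 0), sq_abs (u (Fin.last n)), hends]
      have hTnn : (0:ℝ) ≤ ∑ k ∈ range n, (v' (k+1) - v' k) :=
        Finset.sum_nonneg fun k _ => hδ k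
      have hDge : D ≥ cut k0 := by
        rw [hD2]
        have h1 : ∑ k ∈ range n, (v' (k+1) - v' k) * cut k0
            ≤ ∑ k ∈ range n, (v' (k+1) - v' k) * cut k :=
          Finset.sum_le_sum fun k hk => mul_le_mul_of_nonneg_left (hmin k hk) (hδ k)
        have h2 : ∑ k ∈ range n, (v' (k+1) - v' k) * cut k0
            = (∑ k ∈ range n, (v' (k+1) - v' k)) * cut k0 := (Finset.sum_mul _ _ _).symm
        have h3 : cut k0 ≤ (∑ k ∈ range n, (v' (k+1) - v' k)) * cut k0 := by
          nlinarith [hcutle k0, hTsum, hT1, hTnn]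
        linarith
      refine ⟨S k0, ?_⟩
      have hfold : (∑ i ∈ S k0, ∑ j ∈ (S k0)ᶜ, Wm i j) = cut k0 := rfl
      rw [hfold]
      linarith
end

section
/- Let G = (V, E) be an unweighted connected graph on n vertices with Laplacian L and minimum degree d_min ≥ 1. Then the second smallest eigenvalue satisfies λ₂(L) ≥ min_{S ⊂ V, S ≠ ∅, d(S) ≤ d(V)/2} (d_min · |∂S|²)/(2·d(S)²), where |∂S| is the number of edges between S and its complement and d(S) = ∑_{i∈S} deg(i). -/
open Matrix Finset SimpleGraph

namespace CheegerAux

variable {n : ℕ} (G : SimpleGraph (Fin n)) [DecidableRel G.Adj]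

lemma row_sum (i : Fin n) :
    ∑ j, (if G.Adj i j then (1:ℝ) else 0) = (G.degree i : ℝ) := by
  rw [SimpleGraph.degree, neighborFinset_eq_filter]
  simp [Finset.sum_boole]

lemma col_sum (j : Fin n) :
    ∑ i, (if G.Adj i j then (1:ℝ) else 0) = (G.degree j : ℝ) := by
  rw [← row_sum G j]
  congr 1; ext i; simp [SimpleGraph.adj_comm]

lemma quad (v : Fin n → ℝ) :
    v ⬝ᵥ ((Matrix.diagonal (fun i => (G.degree i : ℝ)) - G.adjMatrix ℝ) *ᵥ v)
      = (1/2) * ∑ i, ∑ j, (if G.Adj i j then (1:ℝ) else 0) * (v i - v j)^2 := by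
  have expand : ∀ i j, (if G.Adj i j then (1:ℝ) else 0) * (v i - v j)^2
      = (if G.Adj i j then (1:ℝ) else 0) * (v i)^2
        + (if G.Adj i j then (1:ℝ) else 0) * (v j)^2
        - 2 * ((if G.Adj i j then (1:ℝ) else 0) * (v i * v j)) := by
    intro i j; ring
  have h1 : ∑ i, ∑ j, (if G.Adj i j then (1:ℝ) else 0) * (v i)^2
      = ∑ i, (G.degree i : ℝ) * (v i)^2 := by
    refine Finset.sum_congr rfl fun i _ => ?_
    rw [← Finset.sum_mul, row_sum]
  have h2 : ∑ i, ∑ j, (if G.Adj i j then (1:ℝ) else 0) * (v j)^2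
      = ∑ i, (G.degree i : ℝ) * (v i)^2 := by
    rw [Finset.sum_comm]
    refine Finset.sum_congr rfl fun j _ => ?_
    rw [← Finset.sum_mul, col_sum]
  have hL : v ⬝ᵥ ((Matrix.diagonal (fun i => (G.degree i : ℝ)) - G.adjMatrix ℝ) *ᵥ v)
      = ∑ i, (G.degree i : ℝ) * (v i)^2
        - ∑ i, ∑ j, (if G.Adj i j then (1:ℝ) else 0) * (v i * v j) := by
    simp only [dotProduct, Matrix.mulVec, dotProduct, Matrix.sub_apply,
      Matrix.diagonal_apply, SimpleGraph.adjMatrix_apply]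
    rw [← Finset.sum_sub_distrib]
    refine Finset.sum_congr rfl fun i _ => ?_
    have key : ∀ j, v i * (((if i = j then (G.degree i : ℝ) else 0)
          - (if G.Adj i j then (1:ℝ) else 0)) * v j)
        = (if i = j then (G.degree i : ℝ) * (v i)^2 else 0)
          - (if G.Adj i j then (1:ℝ) else 0) * (v i * v j) := by
      intro j
      by_cases h : i = j
      · subst h; rw [if_pos rfl, if_pos rfl]; ring
      · rw [if_neg h, if_neg h]; ring
    rw [Finset.mul_sum]
    simp only [key, Finset.sum_sub_distrib, Finset.sum_ite_eq, Finset.mem_univ, if_true]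
  rw [hL]
  simp only [expand, Finset.sum_sub_distrib, Finset.sum_add_distrib, h1, h2, ← Finset.mul_sum]
  ring


lemma exists_median {n : ℕ} (hn : 0 < n) (d : Fin n → ℝ) (hd : ∀ i, 0 ≤ d i)
    (v : Fin n → ℝ) :
    ∃ c : ℝ, (∑ i ∈ univ.filter (fun i => c < v i), d i) ≤ (∑ i, d i) / 2 ∧
             (∑ i ∈ univ.filter (fun i => v i < c), d i) ≤ (∑ i, d i) / 2 := by
  set vol := ∑ i, d i with hvol
  have hvol0 : 0 ≤ vol := Finset.sum_nonneg fun i _ => hd i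
  set up : ℝ → ℝ := fun x => ∑ i ∈ univ.filter (fun i => x ≤ v i), d i with hup
  set values : Finset ℝ := Finset.image v univ with hvalues
  have hvne : values.Nonempty := ⟨v ⟨0, hn⟩, Finset.mem_image_of_mem v (Finset.mem_univ _)⟩
  set cand : Finset ℝ := values.filter (fun x => vol / 2 ≤ up x) with hcand
  have hcne : cand.Nonempty := by
    refine ⟨values.min' hvne, Finset.mem_filter.mpr ⟨values.min'_mem hvne, ?_⟩⟩
    have : univ.filter (fun i => values.min' hvne ≤ v i) = univ := by
      refine Finset.filter_true_of_mem fun i _ => ?_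
      exact values.min'_le _ (Finset.mem_image_of_mem v (Finset.mem_univ _))
    simp only [hup, this]
    linarith
  set c := cand.max' hcne with hc
  have hcmem := cand.max'_mem hcne
  have hcup : vol / 2 ≤ up c := (Finset.mem_filter.mp hcmem).2
  refine ⟨c, ?_, ?_⟩
  · -- strict upper part small
    by_contra hcon
    push_neg at hcon
    have hne : (univ.filter (fun i => c < v i)).Nonempty := by
      rw [Finset.nonempty_iff_ne_empty]
      intro he
      rw [he] at hcon; simp at hcon; linarith
    obtain ⟨i0, hi0⟩ := hne
    have hi0' : c < v i0 := (Finset.mem_filter.mp hi0).2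
    set vc : Finset ℝ := values.filter (fun x => c < x) with hvc
    have hvcne : vc.Nonempty :=
      ⟨v i0, Finset.mem_filter.mpr ⟨Finset.mem_image_of_mem v (Finset.mem_univ _), hi0'⟩⟩
    set c' := vc.min' hvcne with hc'
    have hc'mem := vc.min'_mem hvcne
    have hc'gt : c < c' := (Finset.mem_filter.mp hc'mem).2
    have hsets : univ.filter (fun i => c' ≤ v i) = univ.filter (fun i => c < v i) := by
      ext i
      simp only [Finset.mem_filter, Finset.mem_univ, true_and]
      constructor
      · intro h; exact lt_of_lt_of_le hc'gt h
      · intro h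
        exact vc.min'_le _ (Finset.mem_filter.mpr
          ⟨Finset.mem_image_of_mem v (Finset.mem_univ _), h⟩)
    have hc'cand : c' ∈ cand := by
      refine Finset.mem_filter.mpr ⟨(Finset.mem_filter.mp hc'mem).1, ?_⟩
      show vol / 2 ≤ up c'
      simp only [hup, hsets]
      linarith
    have := cand.le_max' _ hc'cand
    rw [← hc] at this
    linarith
  · -- lower part small
    have hsplit : (∑ i ∈ univ.filter (fun i => v i < c), d i) + up c = vol := by
      simp only [hup, hvol]
      rw [← Finset.sum_filter_add_sum_filter_not univ (fun i => v i < c) d]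
      congr 1
      exact Finset.sum_congr (by ext i; simp [not_lt]) (fun _ _ => rfl)
    linarith


lemma sweep {n : ℕ} (hn : 0 < n) (A : Fin n → Fin n → ℝ)
    (hA01 : ∀ i j, A i j = 0 ∨ A i j = 1)
    (hAsymm : ∀ i j, A i j = A j i)
    (d : Fin n → ℝ) (hd : ∀ i, ∑ j, A i j = d i) (hd1 : ∀ i, (1:ℝ) ≤ d i)
    (α : ℝ) (hα : 0 ≤ α) (g : Fin n → ℝ) (hg : ∀ i, 0 ≤ g i)
    (hsupp : ∑ i ∈ univ.filter (fun i => 0 < g i), d i ≤ (∑ i, d i) / 2)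
    (hcut : ∀ S : Finset (Fin n), S.Nonempty → S ≠ univ →
      (∑ i ∈ S, d i) ≤ (∑ i, d i) / 2 →
      α * (∑ i ∈ S, d i) ≤ ∑ i ∈ S, ∑ j ∈ Sᶜ, A i j) :
    α^2 * ∑ i, d i * (g i)^2 ≤ ∑ i, ∑ j, A i j * (g i - g j)^2 := by
  classical
  have hA0 : ∀ i j, 0 ≤ A i j := by
    intro i j; rcases hA01 i j with h | h <;> rw [h] <;> norm_num
  have hd0 : ∀ i, 0 ≤ d i := fun i => le_trans zero_le_one (hd1 i)
  set w : Fin n → ℝ := fun i => (g i)^2 with hwdef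
  have hw0 : ∀ i, 0 ≤ w i := fun i => sq_nonneg _
  have hT0 : (0:ℝ) ≤ ∑ i, ∑ j, A i j * (g i - g j)^2 :=
    Finset.sum_nonneg fun i _ => Finset.sum_nonneg fun j _ =>
      mul_nonneg (hA0 i j) (sq_nonneg _)
  have hD0 : (0:ℝ) ≤ ∑ i, d i * w i :=
    Finset.sum_nonneg fun i _ => mul_nonneg (hd0 i) (hw0 i)
  rcases eq_or_lt_of_le hD0 with hDeq | hDpos
  · -- D = 0 : trivial
    have : ∀ i, d i * w i = 0 := by
      intro i
      have := (Finset.sum_eq_zero_iff_of_nonneg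
        (fun i _ => mul_nonneg (hd0 i) (hw0 i))).mp hDeq.symm
      exact this i (Finset.mem_univ i)
    have hg0 : ∀ i, (g i)^2 = 0 := by
      intro i
      have hdi : d i ≠ 0 := by have := hd1 i; intro h; rw [h] at this; linarith
      have := this i
      exact (mul_eq_zero.mp this).resolve_left hdi
    calc α^2 * ∑ i, d i * (g i)^2 = α^2 * ∑ i, d i * w i := rfl
      _ = 0 := by rw [← hDeq]; ring
      _ ≤ _ := hT0
  · -- main case
    set σ := Tuple.sort (fun i => -(w i)) with hσdef
    have hmono := Tuple.monotone_sort (fun i => -(w i))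
    set ws : ℕ → ℝ := fun k => if h : k < n then w (σ ⟨k, h⟩) else 0 with hwsdef
    have hws0 : ∀ k, 0 ≤ ws k := by
      intro k; simp only [hwsdef]; split
      · exact hw0 _
      · exact le_refl 0
    have hwsval : ∀ i : Fin n, ws ((σ.symm i : ℕ)) = w i := by
      intro i
      have h : ((σ.symm i : ℕ)) < n := (σ.symm i).2
      simp only [hwsdef]
      rw [dif_pos h]
      congr 1
      rw [show (⟨(σ.symm i : ℕ), h⟩ : Fin n) = σ.symm i from Fin.eta _ _]
      exact Equiv.apply_symm_apply σ i
    have hws_succ : ∀ k, ws (k+1) ≤ ws k := by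
      intro k
      by_cases h1 : k + 1 < n
      · have h2 : k < n := Nat.lt_of_succ_lt h1
        simp only [hwsdef]
        rw [dif_pos h1, dif_pos h2]
        have := hmono (show (⟨k, h2⟩ : Fin n) ≤ ⟨k+1, h1⟩ from by
          simp [Fin.le_def])
        simp only [Function.comp_apply] at this
        rw [← hσdef] at this
        linarith
      · simp only [hwsdef]
        rw [dif_neg h1]
        split
        · exact hw0 _
        · exact le_refl 0
    have hws_anti : Antitone ws := antitone_nat_of_succ_le hws_succ
    have hwsn : ws n = 0 := by simp only [hwsdef]; rw [dif_neg (lt_irrefl n)]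
    set Δ : ℕ → ℝ := fun k => ws k - ws (k+1) with hΔdef
    have hΔ0 : ∀ k, 0 ≤ Δ k := fun k => sub_nonneg.mpr (hws_succ k)
    -- telescoping
    have htel : ∀ r s : ℕ, r ≤ s → ∑ k ∈ Finset.Ico r s, Δ k = ws r - ws s := by
      intro r s hrs
      rw [Finset.sum_Ico_eq_sum_range]
      calc ∑ j ∈ Finset.range (s - r), Δ (r + j)
          = ∑ j ∈ Finset.range (s - r),
              ((fun t => ws (r + t)) j - (fun t => ws (r + t)) (j+1)) := by
            refine Finset.sum_congr rfl fun j _ => ?_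
            simp only [hΔdef]
            rw [← Nat.add_assoc]
        _ = ws (r + 0) - ws (r + (s - r)) := Finset.sum_range_sub' _ _
        _ = ws r - ws s := by rw [Nat.add_zero, Nat.add_sub_cancel' hrs]
    -- the sweep sets
    set Sk : ℕ → Finset (Fin n) := fun k => univ.filter (fun i => (σ.symm i : ℕ) ≤ k)
      with hSkdef
    have hmemSk : ∀ (i : Fin n) (k : ℕ), i ∈ Sk k ↔ (σ.symm i : ℕ) ≤ k := by
      intro i k; simp [hSkdef]
    -- pointwise layer-cake for single values
    have hpoint : ∀ i : Fin n,
        ∑ k ∈ Finset.range n, Δ k * (if i ∈ Sk k then (1:ℝ) else 0) = w i := by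
      intro i
      have hfilter : (Finset.range n).filter (fun k => i ∈ Sk k)
          = Finset.Ico ((σ.symm i : ℕ)) n := by
        ext k
        simp [hmemSk, Finset.mem_Ico, and_comm]
      calc ∑ k ∈ Finset.range n, Δ k * (if i ∈ Sk k then (1:ℝ) else 0)
          = ∑ k ∈ (Finset.range n).filter (fun k => i ∈ Sk k), Δ k := by
            rw [Finset.sum_filter]
            exact Finset.sum_congr rfl fun k _ => by split <;> simp
        _ = ws ((σ.symm i : ℕ)) - ws n := by
            rw [hfilter]; exact htel _ _ (le_of_lt (σ.symm i).2)
        _ = w i := by rw [hwsn, hwsval]; ring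
    -- pointwise layer-cake for pairs
    have haux : ∀ i j : Fin n, (σ.symm i : ℕ) ≤ (σ.symm j : ℕ) →
        ∑ k ∈ Finset.range n,
          Δ k * |(if i ∈ Sk k then (1:ℝ) else 0) - (if j ∈ Sk k then 1 else 0)|
          = |w i - w j| := by
      intro i j hij
      have hwij : w j ≤ w i := by
        rw [← hwsval i, ← hwsval j]; exact hws_anti hij
      have hfilter : (Finset.range n).filter
            (fun k => (σ.symm i : ℕ) ≤ k ∧ ¬ ((σ.symm j : ℕ) ≤ k))
          = Finset.Ico ((σ.symm i : ℕ)) ((σ.symm j : ℕ)) := by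
        ext k
        simp only [Finset.mem_filter, Finset.mem_range, Finset.mem_Ico, not_le]
        constructor
        · rintro ⟨_, h1, h2⟩; exact ⟨h1, h2⟩
        · rintro ⟨h1, h2⟩
          exact ⟨lt_of_lt_of_le h2 (le_of_lt (σ.symm j).2), h1, h2⟩
      calc ∑ k ∈ Finset.range n,
            Δ k * |(if i ∈ Sk k then (1:ℝ) else 0) - (if j ∈ Sk k then 1 else 0)|
          = ∑ k ∈ Finset.range n,
              (if (σ.symm i : ℕ) ≤ k ∧ ¬ ((σ.symm j : ℕ) ≤ k) then Δ k else 0) := by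
            refine Finset.sum_congr rfl fun k _ => ?_
            rw [show (if i ∈ Sk k then (1:ℝ) else 0) = (if (σ.symm i : ℕ) ≤ k then 1 else 0)
              from if_congr (hmemSk i k) rfl rfl]
            rw [show (if j ∈ Sk k then (1:ℝ) else 0) = (if (σ.symm j : ℕ) ≤ k then 1 else 0)
              from if_congr (hmemSk j k) rfl rfl]
            by_cases h1 : (σ.symm i : ℕ) ≤ k <;> by_cases h2 : (σ.symm j : ℕ) ≤ k
            · have : (σ.symm i : ℕ) ≤ k ∧ ¬ ((σ.symm j : ℕ) ≤ k) ↔ False := by tauto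
              rw [if_pos h1, if_pos h2, if_congr this rfl rfl, if_neg id]; simp
            · have : (σ.symm i : ℕ) ≤ k ∧ ¬ ((σ.symm j : ℕ) ≤ k) ↔ True := by tauto
              rw [if_pos h1, if_neg h2, if_congr this rfl rfl, if_pos trivial]; simp
            · exact absurd (le_trans hij h2) h1
            · have : (σ.symm i : ℕ) ≤ k ∧ ¬ ((σ.symm j : ℕ) ≤ k) ↔ False := by tauto
              rw [if_neg h1, if_neg h2, if_congr this rfl rfl, if_neg id]; simp
        _ = ∑ k ∈ Finset.Ico ((σ.symm i : ℕ)) ((σ.symm j : ℕ)), Δ k := by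
            rw [← Finset.sum_filter, hfilter]
        _ = |w i - w j| := by
            rw [htel _ _ hij, hwsval, hwsval, abs_of_nonneg (by linarith)]
    have hpair : ∀ i j : Fin n,
        ∑ k ∈ Finset.range n,
          Δ k * |(if i ∈ Sk k then (1:ℝ) else 0) - (if j ∈ Sk k then 1 else 0)|
          = |w i - w j| := by
      intro i j
      rcases le_total ((σ.symm i : ℕ)) ((σ.symm j : ℕ)) with h | h
      · exact haux i j h
      · rw [show |w i - w j| = |w j - w i| from abs_sub_comm _ _, ← haux j i h]
        exact Finset.sum_congr rfl fun k _ => by rw [abs_sub_comm]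
    -- key: double sums with indicators over finsets
    have key : ∀ (T U : Finset (Fin n)) (f : Fin n → Fin n → ℝ),
        ∑ i, ∑ j, (if i ∈ T then (1:ℝ) else 0) * (if j ∈ U then (1:ℝ) else 0) * f i j
          = ∑ i ∈ T, ∑ j ∈ U, f i j := by
      intro T U f
      have inner : ∀ i, ∑ j, (if j ∈ U then (1:ℝ) else 0) * f i j = ∑ j ∈ U, f i j := by
        intro i
        simp only [ite_mul, one_mul, zero_mul]
        rw [Finset.sum_ite_mem, Finset.univ_inter]
      calc ∑ i, ∑ j, (if i ∈ T then (1:ℝ) else 0) * (if j ∈ U then (1:ℝ) else 0) * f i j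
          = ∑ i, (if i ∈ T then (1:ℝ) else 0) * ∑ j ∈ U, f i j := by
            refine Finset.sum_congr rfl fun i _ => ?_
            rw [← inner i, Finset.mul_sum]
            exact Finset.sum_congr rfl fun j _ => by ring
        _ = ∑ i ∈ T, ∑ j ∈ U, f i j := by
            simp only [ite_mul, one_mul, zero_mul]
            rw [Finset.sum_ite_mem, Finset.univ_inter]
    -- boundary identity
    have hE : ∀ S : Finset (Fin n),
        ∑ i, ∑ j, A i j * |(if i ∈ S then (1:ℝ) else 0) - (if j ∈ S then 1 else 0)|
          = 2 * ∑ i ∈ S, ∑ j ∈ Sᶜ, A i j := by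
      intro S
      have hsplit : ∀ i j, A i j * |(if i ∈ S then (1:ℝ) else 0) - (if j ∈ S then 1 else 0)|
          = (if i ∈ S then (1:ℝ) else 0) * (if j ∈ Sᶜ then (1:ℝ) else 0) * A i j
            + (if j ∈ S then (1:ℝ) else 0) * (if i ∈ Sᶜ then (1:ℝ) else 0) * A i j := by
        intro i j
        by_cases hi : i ∈ S <;> by_cases hj : j ∈ S <;>
          simp [hi, hj, Finset.mem_compl] <;> norm_num <;> ring
      calc ∑ i, ∑ j, A i j * |(if i ∈ S then (1:ℝ) else 0) - (if j ∈ S then 1 else 0)|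
          = ∑ i, ∑ j, ((if i ∈ S then (1:ℝ) else 0) * (if j ∈ Sᶜ then (1:ℝ) else 0) * A i j
              + (if j ∈ S then (1:ℝ) else 0) * (if i ∈ Sᶜ then (1:ℝ) else 0) * A i j) := by
            exact Finset.sum_congr rfl fun i _ => Finset.sum_congr rfl fun j _ => hsplit i j
        _ = ∑ i, ∑ j, (if i ∈ S then (1:ℝ) else 0) * (if j ∈ Sᶜ then (1:ℝ) else 0) * A i j
            + ∑ i, ∑ j, (if j ∈ S then (1:ℝ) else 0) * (if i ∈ Sᶜ then (1:ℝ) else 0) * A i j := by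
            rw [← Finset.sum_add_distrib]
            exact Finset.sum_congr rfl fun i _ => Finset.sum_add_distrib
        _ = ∑ i ∈ S, ∑ j ∈ Sᶜ, A i j + ∑ j ∈ S, ∑ i ∈ Sᶜ, A i j := by
            rw [key S Sᶜ A]
            congr 1
            rw [Finset.sum_comm]
            exact key S Sᶜ (fun j i => A i j)
        _ = 2 * ∑ i ∈ S, ∑ j ∈ Sᶜ, A i j := by
            have : ∑ j ∈ S, ∑ i ∈ Sᶜ, A i j = ∑ j ∈ S, ∑ i ∈ Sᶜ, A j i :=
              Finset.sum_congr rfl fun j _ => Finset.sum_congr rfl fun i _ => hAsymm i j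
            rw [this]; ring
    -- volume decomposition along the sweep
    have hDsum : ∑ i, d i * w i = ∑ k ∈ Finset.range n, Δ k * ∑ i ∈ Sk k, d i := by
      calc ∑ i, d i * w i
          = ∑ i, d i * ∑ k ∈ Finset.range n, Δ k * (if i ∈ Sk k then (1:ℝ) else 0) :=
            Finset.sum_congr rfl fun i _ => by rw [hpoint i]
        _ = ∑ i, ∑ k ∈ Finset.range n, Δ k * (d i * (if i ∈ Sk k then (1:ℝ) else 0)) := by
            refine Finset.sum_congr rfl fun i _ => ?_
            rw [Finset.mul_sum]
            exact Finset.sum_congr rfl fun k _ => by ring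
        _ = ∑ k ∈ Finset.range n, ∑ i, Δ k * (d i * (if i ∈ Sk k then (1:ℝ) else 0)) :=
            Finset.sum_comm
        _ = ∑ k ∈ Finset.range n, Δ k * ∑ i ∈ Sk k, d i := by
            refine Finset.sum_congr rfl fun k _ => ?_
            rw [← Finset.mul_sum]
            congr 1
            simp only [mul_ite, mul_one, mul_zero]
            rw [Finset.sum_ite_mem, Finset.univ_inter]
    -- B decomposition along the sweep
    have hBsum : ∑ i, ∑ j, A i j * |w i - w j|
        = ∑ k ∈ Finset.range n, Δ k * (2 * ∑ i ∈ Sk k, ∑ j ∈ (Sk k)ᶜ, A i j) := by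
      calc ∑ i, ∑ j, A i j * |w i - w j|
          = ∑ i, ∑ j, ∑ k ∈ Finset.range n, Δ k *
              (A i j * |(if i ∈ Sk k then (1:ℝ) else 0) - (if j ∈ Sk k then 1 else 0)|) := by
            refine Finset.sum_congr rfl fun i _ => Finset.sum_congr rfl fun j _ => ?_
            rw [← hpair i j, Finset.mul_sum]
            exact Finset.sum_congr rfl fun k _ => by ring
        _ = ∑ i, ∑ k ∈ Finset.range n, ∑ j, Δ k *
              (A i j * |(if i ∈ Sk k then (1:ℝ) else 0) - (if j ∈ Sk k then 1 else 0)|) :=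
            Finset.sum_congr rfl fun i _ => Finset.sum_comm
        _ = ∑ k ∈ Finset.range n, ∑ i, ∑ j, Δ k *
              (A i j * |(if i ∈ Sk k then (1:ℝ) else 0) - (if j ∈ Sk k then 1 else 0)|) :=
            Finset.sum_comm
        _ = ∑ k ∈ Finset.range n, Δ k * (2 * ∑ i ∈ Sk k, ∑ j ∈ (Sk k)ᶜ, A i j) := by
            refine Finset.sum_congr rfl fun k _ => ?_
            rw [← hE (Sk k), Finset.mul_sum]
            exact Finset.sum_congr rfl fun i _ => by rw [Finset.mul_sum]
    -- volume positivity
    have hvolpos : (0:ℝ) < ∑ i, d i := by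
      have h1 : (n : ℝ) = ∑ _i : Fin n, (1:ℝ) := by
        rw [Finset.sum_const, Finset.card_univ, Fintype.card_fin]; simp
      have h2 : ∑ _i : Fin n, (1:ℝ) ≤ ∑ i, d i := Finset.sum_le_sum fun i _ => hd1 i
      have h3 : (0:ℝ) < (n:ℝ) := by exact_mod_cast hn
      linarith
    -- per-level cut bound
    have hlevel : ∀ k ∈ Finset.range n,
        Δ k * (2 * (α * ∑ i ∈ Sk k, d i)) ≤ Δ k * (2 * ∑ i ∈ Sk k, ∑ j ∈ (Sk k)ᶜ, A i j) := by
      intro k hk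
      rcases eq_or_lt_of_le (hΔ0 k) with hz | hpos
      · rw [← hz]; simp
      · have hkn : k < n := Finset.mem_range.mp hk
        have hwsk : 0 < ws k := lt_of_le_of_lt (hws0 (k+1)) (by simp only [hΔdef] at hpos; linarith)
        have hsub : Sk k ⊆ univ.filter (fun i => 0 < g i) := by
          intro i hi
          have hik : (σ.symm i : ℕ) ≤ k := (hmemSk i k).mp hi
          have hwi : 0 < w i := by
            rw [← hwsval i]
            exact lt_of_lt_of_le hwsk (hws_anti hik)
          have : g i ≠ 0 := by
            intro h0
            rw [hwdef] at hwi
            simp only [h0] at hwi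
            norm_num at hwi
          refine Finset.mem_filter.mpr ⟨Finset.mem_univ _, lt_of_le_of_ne (hg i) (Ne.symm this)⟩
        have hdSk : ∑ i ∈ Sk k, d i ≤ (∑ i, d i) / 2 :=
          le_trans (Finset.sum_le_sum_of_subset_of_nonneg hsub (fun i _ _ => hd0 i)) hsupp
        have hne : (Sk k).Nonempty := by
          refine ⟨σ ⟨0, hn⟩, (hmemSk _ k).mpr ?_⟩
          rw [Equiv.symm_apply_apply]
          exact Nat.zero_le k
        have hnu : Sk k ≠ univ := by
          intro h
          rw [h] at hdSk
          linarith
        have := hcut (Sk k) hne hnu hdSk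
        have h2 : 0 ≤ Δ k * 2 := by linarith
        nlinarith
    -- lower bound on B
    have hBlow : 2 * α * (∑ i, d i * w i) ≤ ∑ i, ∑ j, A i j * |w i - w j| := by
      rw [hBsum, hDsum, Finset.mul_sum]
      refine Finset.sum_le_sum fun k hk => ?_
      have := hlevel k hk
      nlinarith [hlevel k hk]
    -- Cauchy–Schwarz
    have habs : ∀ i j, A i j * |w i - w j|
        = (A i j * |g i - g j|) * (A i j * (g i + g j)) := by
      intro i j
      have h1 : |w i - w j| = |g i - g j| * (g i + g j) := by
        have h2 : w i - w j = (g i - g j) * (g i + g j) := by simp only [hwdef]; ring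
        rw [h2, abs_mul, abs_of_nonneg (show (0:ℝ) ≤ g i + g j by have := hg i; have := hg j; linarith)]
      rcases hA01 i j with h | h <;> rw [h, h1] <;> ring
    have hA2 : ∀ i j, (A i j)^2 = A i j := by
      intro i j; rcases hA01 i j with h | h <;> rw [h] <;> norm_num
    have hCS := Finset.sum_mul_sq_le_sq_mul_sq (univ : Finset (Fin n × Fin n))
      (fun p => A p.1 p.2 * |g p.1 - g p.2|) (fun p => A p.1 p.2 * (g p.1 + g p.2))
    have hB2 : (∑ i, ∑ j, A i j * |w i - w j|)^2
        ≤ (∑ i, ∑ j, A i j * (g i - g j)^2) * (∑ i, ∑ j, A i j * (g i + g j)^2) := by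
      have e1 : ∑ i, ∑ j, A i j * |w i - w j|
          = ∑ p : Fin n × Fin n, (A p.1 p.2 * |g p.1 - g p.2|) * (A p.1 p.2 * (g p.1 + g p.2)) := by
        rw [Fintype.sum_prod_type]
        exact Finset.sum_congr rfl fun i _ => Finset.sum_congr rfl fun j _ => habs i j
      have e2 : ∑ p : Fin n × Fin n, (A p.1 p.2 * |g p.1 - g p.2|)^2
          = ∑ i, ∑ j, A i j * (g i - g j)^2 := by
        rw [Fintype.sum_prod_type]
        refine Finset.sum_congr rfl fun i _ => Finset.sum_congr rfl fun j _ => ?_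
        rw [mul_pow, sq_abs, hA2]
      have e3 : ∑ p : Fin n × Fin n, (A p.1 p.2 * (g p.1 + g p.2))^2
          = ∑ i, ∑ j, A i j * (g i + g j)^2 := by
        rw [Fintype.sum_prod_type]
        refine Finset.sum_congr rfl fun i _ => Finset.sum_congr rfl fun j _ => ?_
        rw [mul_pow, hA2]
      rw [e1, ← e2, ← e3]
      exact hCS
    have hC : ∑ i, ∑ j, A i j * (g i + g j)^2 ≤ 4 * ∑ i, d i * w i := by
      have step1 : ∀ i j, A i j * (g i + g j)^2 ≤ A i j * (2 * w i + 2 * w j) := by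
        intro i j
        refine mul_le_mul_of_nonneg_left ?_ (hA0 i j)
        simp only [hwdef]
        nlinarith [sq_nonneg (g i - g j)]
      calc ∑ i, ∑ j, A i j * (g i + g j)^2
          ≤ ∑ i, ∑ j, A i j * (2 * w i + 2 * w j) :=
            Finset.sum_le_sum fun i _ => Finset.sum_le_sum fun j _ => step1 i j
        _ = ∑ i, ∑ j, (2 * w i * A i j) + ∑ i, ∑ j, (2 * w j * A i j) := by
            rw [← Finset.sum_add_distrib]
            refine Finset.sum_congr rfl fun i _ => ?_
            rw [← Finset.sum_add_distrib]
            exact Finset.sum_congr rfl fun j _ => by ring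
        _ = 2 * (∑ i, d i * w i) + 2 * (∑ i, d i * w i) := by
            congr 1
            · calc ∑ i, ∑ j, (2 * w i * A i j)
                  = ∑ i, 2 * w i * d i := by
                    refine Finset.sum_congr rfl fun i _ => ?_
                    rw [← Finset.mul_sum, hd]
                _ = 2 * ∑ i, d i * w i := by
                    rw [Finset.mul_sum]
                    exact Finset.sum_congr rfl fun i _ => by ring
            · calc ∑ i, ∑ j, (2 * w j * A i j)
                  = ∑ j, ∑ i, (2 * w j * A i j) := Finset.sum_comm
                _ = ∑ j, 2 * w j * d j := by
                    refine Finset.sum_congr rfl fun j _ => ?_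
                    rw [← Finset.mul_sum]
                    congr 1
                    rw [← hd j]
                    exact Finset.sum_congr rfl fun i _ => hAsymm i j
                _ = 2 * ∑ i, d i * w i := by
                    rw [Finset.mul_sum]
                    exact Finset.sum_congr rfl fun i _ => by ring
        _ = 4 * ∑ i, d i * w i := by ring
    have hfinal : (α^2 * ∑ i, d i * w i) * (4 * ∑ i, d i * w i)
        ≤ (∑ i, ∑ j, A i j * (g i - g j)^2) * (4 * ∑ i, d i * w i) := by
      have h0 : 0 ≤ 2 * α * ∑ i, d i * w i := by
        have := le_of_lt hDpos
        have h00 : (0:ℝ) ≤ 2 * α := by linarith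
        exact mul_nonneg h00 this
      have h1 : (2 * α * ∑ i, d i * w i)^2 ≤ (∑ i, ∑ j, A i j * |w i - w j|)^2 :=
        pow_le_pow_left₀ h0 hBlow 2
      have h2 : (∑ i, ∑ j, A i j * |w i - w j|)^2
          ≤ (∑ i, ∑ j, A i j * (g i - g j)^2) * (4 * ∑ i, d i * w i) :=
        le_trans hB2 (mul_le_mul_of_nonneg_left hC hT0)
      nlinarith [h1, h2]
    have hres := le_of_mul_le_mul_right hfinal (by linarith [hDpos] : (0:ℝ) < 4 * ∑ i, d i * w i)
    exact hres


set_option maxHeartbeats 2000000 in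
lemma main_aux (n : ℕ) (hn : 0 < n) (G : SimpleGraph (Fin n)) [DecidableRel G.Adj]
    (hdmin : ∀ i, 1 ≤ G.degree i)
    (v : Fin n → ℝ) (hv : v ⬝ᵥ (fun _ => (1:ℝ)) = 0) (hvne : v ≠ 0) :
    sInf {x | ∃ S : Finset (Fin n), S.Nonempty ∧ S ≠ univ ∧
        (∑ i ∈ S, (G.degree i:ℝ)) ≤ (∑ i, (G.degree i:ℝ)) / 2 ∧
        x = (sInf {x | ∃ i : Fin n, x = (G.degree i : ℝ)})
            * (∑ i ∈ S, ∑ j ∈ Sᶜ, (if G.Adj i j then (1:ℝ) else 0))^2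
            / (2 * (∑ i ∈ S, (G.degree i:ℝ))^2)}
      ≤ v ⬝ᵥ ((Matrix.diagonal (fun i => (G.degree i : ℝ)) - G.adjMatrix ℝ) *ᵥ v) / (v ⬝ᵥ v) := by
  classical
  have hd1 : ∀ i, (1:ℝ) ≤ (G.degree i : ℝ) := fun i => by exact_mod_cast hdmin i
  have hd0 : ∀ i, (0:ℝ) ≤ (G.degree i : ℝ) := fun i => le_trans zero_le_one (hd1 i)
  -- n ≥ 2
  have hn2 : 1 < n := by
    rcases Nat.lt_or_ge 1 n with h | h
    · exact h
    · exfalso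
      have hn1 : n = 1 := by omega
      subst hn1
      have hpos : 0 < G.degree 0 := lt_of_lt_of_le Nat.zero_lt_one (hdmin 0)
      obtain ⟨wv, hadj⟩ := (SimpleGraph.degree_pos_iff_exists_adj G 0).mp hpos
      exact G.ne_of_adj hadj (Subsingleton.elim _ _)
  -- dmin facts
  have hDne : Set.Nonempty {x | ∃ i : Fin n, x = (G.degree i : ℝ)} :=
    ⟨(G.degree ⟨0, hn⟩ : ℝ), ⟨⟨0, hn⟩, rfl⟩⟩
  have hDbdd : BddBelow {x | ∃ i : Fin n, x = (G.degree i : ℝ)} :=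
    ⟨1, by rintro x ⟨i, rfl⟩; exact hd1 i⟩
  have hdmin1 : (1:ℝ) ≤ sInf {x | ∃ i : Fin n, x = (G.degree i : ℝ)} :=
    le_csInf hDne (by rintro x ⟨i, rfl⟩; exact hd1 i)
  have hdminpos : (0:ℝ) < sInf {x | ∃ i : Fin n, x = (G.degree i : ℝ)} :=
    lt_of_lt_of_le one_pos hdmin1
  have hdminle : ∀ i, sInf {x | ∃ i : Fin n, x = (G.degree i : ℝ)} ≤ (G.degree i : ℝ) :=
    fun i => csInf_le hDbdd ⟨i, rfl⟩
  -- the Cheeger set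
  have helem : ∀ x ∈ {x | ∃ S : Finset (Fin n), S.Nonempty ∧ S ≠ univ ∧
        (∑ i ∈ S, (G.degree i:ℝ)) ≤ (∑ i, (G.degree i:ℝ)) / 2 ∧
        x = (sInf {x | ∃ i : Fin n, x = (G.degree i : ℝ)})
            * (∑ i ∈ S, ∑ j ∈ Sᶜ, (if G.Adj i j then (1:ℝ) else 0))^2
            / (2 * (∑ i ∈ S, (G.degree i:ℝ))^2)}, (0:ℝ) ≤ x := by
    rintro x ⟨S, _, _, _, rfl⟩
    have h1 : (0:ℝ) ≤ (∑ i ∈ S, ∑ j ∈ Sᶜ, (if G.Adj i j then (1:ℝ) else 0))^2 := sq_nonneg _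
    have h2 : (0:ℝ) ≤ 2 * (∑ i ∈ S, (G.degree i:ℝ))^2 := by positivity
    exact div_nonneg (mul_nonneg (le_of_lt hdminpos) h1) h2
  have hCSbdd : BddBelow {x | ∃ S : Finset (Fin n), S.Nonempty ∧ S ≠ univ ∧
        (∑ i ∈ S, (G.degree i:ℝ)) ≤ (∑ i, (G.degree i:ℝ)) / 2 ∧
        x = (sInf {x | ∃ i : Fin n, x = (G.degree i : ℝ)})
            * (∑ i ∈ S, ∑ j ∈ Sᶜ, (if G.Adj i j then (1:ℝ) else 0))^2
            / (2 * (∑ i ∈ S, (G.degree i:ℝ))^2)} := ⟨0, helem⟩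
  have hCSne : Set.Nonempty {x | ∃ S : Finset (Fin n), S.Nonempty ∧ S ≠ univ ∧
        (∑ i ∈ S, (G.degree i:ℝ)) ≤ (∑ i, (G.degree i:ℝ)) / 2 ∧
        x = (sInf {x | ∃ i : Fin n, x = (G.degree i : ℝ)})
            * (∑ i ∈ S, ∑ j ∈ Sᶜ, (if G.Adj i j then (1:ℝ) else 0))^2
            / (2 * (∑ i ∈ S, (G.degree i:ℝ))^2)} := by
    obtain ⟨i0, _, hi0⟩ := Finset.exists_min_image univ (fun i => G.degree i)
      ⟨⟨0, hn⟩, Finset.mem_univ _⟩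
    obtain ⟨j0, hj0⟩ := Fintype.exists_ne_of_one_lt_card
      (by rw [Fintype.card_fin]; omega) i0
    have hsne : ({i0} : Finset (Fin n)).Nonempty := Finset.singleton_nonempty i0
    have hsnu : ({i0} : Finset (Fin n)) ≠ univ := by
      intro h
      have h1 : ({i0} : Finset (Fin n)).card = 1 := Finset.card_singleton i0
      rw [h, Finset.card_univ, Fintype.card_fin] at h1
      omega
    have hshalf : (∑ i ∈ ({i0} : Finset (Fin n)), (G.degree i:ℝ))
        ≤ (∑ i, (G.degree i:ℝ)) / 2 := by
      rw [Finset.sum_singleton]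
      have hpair : ∑ i ∈ ({i0, j0} : Finset (Fin n)), (G.degree i:ℝ)
          = (G.degree i0 : ℝ) + (G.degree j0 : ℝ) := Finset.sum_pair (Ne.symm hj0)
      have hsub : ∑ i ∈ ({i0, j0} : Finset (Fin n)), (G.degree i:ℝ) ≤ ∑ i, (G.degree i:ℝ) :=
        Finset.sum_le_sum_of_subset_of_nonneg (Finset.subset_univ _) (fun i _ _ => hd0 i)
      have hle : (G.degree i0 : ℝ) ≤ (G.degree j0 : ℝ) := by
        exact_mod_cast hi0 j0 (Finset.mem_univ _)
      rw [hpair] at hsub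
      linarith
    exact ⟨_, ⟨{i0}, hsne, hsnu, hshalf, rfl⟩⟩
  -- abbreviations
  set m := sInf {x | ∃ S : Finset (Fin n), S.Nonempty ∧ S ≠ univ ∧
        (∑ i ∈ S, (G.degree i:ℝ)) ≤ (∑ i, (G.degree i:ℝ)) / 2 ∧
        x = (sInf {x | ∃ i : Fin n, x = (G.degree i : ℝ)})
            * (∑ i ∈ S, ∑ j ∈ Sᶜ, (if G.Adj i j then (1:ℝ) else 0))^2
            / (2 * (∑ i ∈ S, (G.degree i:ℝ))^2)} with hmdef
  have hm0 : (0:ℝ) ≤ m := le_csInf hCSne helem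
  set α := Real.sqrt (2 * m / sInf {x | ∃ i : Fin n, x = (G.degree i : ℝ)}) with hαdef
  have hα0 : (0:ℝ) ≤ α := Real.sqrt_nonneg _
  have hα2 : α^2 = 2 * m / sInf {x | ∃ i : Fin n, x = (G.degree i : ℝ)} :=
    Real.sq_sqrt (by positivity)
  -- the cut hypothesis for the sweep lemma
  have hcut : ∀ S : Finset (Fin n), S.Nonempty → S ≠ univ →
      (∑ i ∈ S, (G.degree i:ℝ)) ≤ (∑ i, (G.degree i:ℝ)) / 2 →
      α * (∑ i ∈ S, (G.degree i:ℝ))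
        ≤ ∑ i ∈ S, ∑ j ∈ Sᶜ, (if G.Adj i j then (1:ℝ) else 0) := by
    intro S hS1 hS2 hS3
    have hdSpos : (0:ℝ) < ∑ i ∈ S, (G.degree i:ℝ) := by
      obtain ⟨i, hi⟩ := hS1
      calc (0:ℝ) < 1 := one_pos
        _ ≤ (G.degree i:ℝ) := hd1 i
        _ ≤ ∑ i ∈ S, (G.degree i:ℝ) := Finset.single_le_sum (fun i _ => hd0 i) hi
    have hb0 : (0:ℝ) ≤ ∑ i ∈ S, ∑ j ∈ Sᶜ, (if G.Adj i j then (1:ℝ) else 0) :=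
      Finset.sum_nonneg fun i _ => Finset.sum_nonneg fun j _ => by positivity
    have hmle : m ≤ (sInf {x | ∃ i : Fin n, x = (G.degree i : ℝ)})
        * (∑ i ∈ S, ∑ j ∈ Sᶜ, (if G.Adj i j then (1:ℝ) else 0))^2
        / (2 * (∑ i ∈ S, (G.degree i:ℝ))^2) := by
      rw [hmdef]
      exact csInf_le hCSbdd ⟨S, hS1, hS2, hS3, rfl⟩
    have h2 : m * (2 * (∑ i ∈ S, (G.degree i:ℝ))^2)
        ≤ (sInf {x | ∃ i : Fin n, x = (G.degree i : ℝ)})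
          * (∑ i ∈ S, ∑ j ∈ Sᶜ, (if G.Adj i j then (1:ℝ) else 0))^2 :=
      (le_div_iff₀ (by positivity)).mp hmle
    have h1 : 2 * m / (sInf {x | ∃ i : Fin n, x = (G.degree i : ℝ)})
        * (∑ i ∈ S, (G.degree i:ℝ))^2
        ≤ (∑ i ∈ S, ∑ j ∈ Sᶜ, (if G.Adj i j then (1:ℝ) else 0))^2 := by
      rw [div_mul_eq_mul_div, div_le_iff₀ hdminpos]
      nlinarith [h2]
    calc α * (∑ i ∈ S, (G.degree i:ℝ))
        = Real.sqrt (2 * m / sInf {x | ∃ i : Fin n, x = (G.degree i : ℝ)})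
          * Real.sqrt ((∑ i ∈ S, (G.degree i:ℝ))^2) := by
          rw [Real.sqrt_sq (le_of_lt hdSpos), hαdef]
      _ = Real.sqrt (2 * m / (sInf {x | ∃ i : Fin n, x = (G.degree i : ℝ)})
            * (∑ i ∈ S, (G.degree i:ℝ))^2) := (Real.sqrt_mul (by positivity) _).symm
      _ ≤ Real.sqrt ((∑ i ∈ S, ∑ j ∈ Sᶜ, (if G.Adj i j then (1:ℝ) else 0))^2) :=
          Real.sqrt_le_sqrt h1
      _ = ∑ i ∈ S, ∑ j ∈ Sᶜ, (if G.Adj i j then (1:ℝ) else 0) := Real.sqrt_sq hb0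
  -- median
  obtain ⟨c, hc1, hc2⟩ := exists_median hn (fun i => (G.degree i:ℝ)) hd0 v
  -- positive and negative parts
  have hfg : univ.filter (fun i => 0 < max (v i - c) 0) = univ.filter (fun i => c < v i) := by
    apply Finset.filter_congr
    intro i _
    simp [lt_max_iff, sub_pos]
  have hfh : univ.filter (fun i => 0 < max (c - v i) 0) = univ.filter (fun i => v i < c) := by
    apply Finset.filter_congr
    intro i _
    simp [lt_max_iff, sub_pos]
  have hA01 : ∀ i j : Fin n, (if G.Adj i j then (1:ℝ) else 0) = 0
      ∨ (if G.Adj i j then (1:ℝ) else 0) = 1 := by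
    intro i j; by_cases hadj : G.Adj i j <;> simp [hadj]
  have hAsymm : ∀ i j : Fin n, (if G.Adj i j then (1:ℝ) else 0)
      = (if G.Adj j i then (1:ℝ) else 0) := by
    intro i j; exact if_congr (G.adj_comm i j) rfl rfl
  have hsw_g := sweep hn (fun i j => if G.Adj i j then (1:ℝ) else 0) hA01 hAsymm
    (fun i => (G.degree i:ℝ)) (fun i => row_sum G i) hd1 α hα0
    (fun i => max (v i - c) 0) (fun i => le_max_right _ _)
    (by rw [hfg]; exact hc1) hcut
  have hsw_h := sweep hn (fun i j => if G.Adj i j then (1:ℝ) else 0) hA01 hAsymm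
    (fun i => (G.degree i:ℝ)) (fun i => row_sum G i) hd1 α hα0
    (fun i => max (c - v i) 0) (fun i => le_max_right _ _)
    (by rw [hfh]; exact hc2) hcut
  -- pointwise decomposition inequality
  have hkey : ∀ x y : ℝ, (max (x - c) 0 - max (y - c) 0)^2
      + (max (c - x) 0 - max (c - y) 0)^2 ≤ (x - y)^2 := by
    intro x y
    rcases le_total x c with hx | hx <;> rcases le_total y c with hy | hy
    · rw [max_eq_right (by linarith : x - c ≤ 0), max_eq_right (by linarith : y - c ≤ 0),
        max_eq_left (by linarith : (0:ℝ) ≤ c - x), max_eq_left (by linarith : (0:ℝ) ≤ c - y)]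
      nlinarith
    · rw [max_eq_right (by linarith : x - c ≤ 0), max_eq_left (by linarith : (0:ℝ) ≤ y - c),
        max_eq_left (by linarith : (0:ℝ) ≤ c - x), max_eq_right (by linarith : c - y ≤ 0)]
      nlinarith
    · rw [max_eq_left (by linarith : (0:ℝ) ≤ x - c), max_eq_right (by linarith : y - c ≤ 0),
        max_eq_right (by linarith : c - x ≤ 0), max_eq_left (by linarith : (0:ℝ) ≤ c - y)]
      nlinarith
    · rw [max_eq_left (by linarith : (0:ℝ) ≤ x - c), max_eq_left (by linarith : (0:ℝ) ≤ y - c),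
        max_eq_right (by linarith : c - x ≤ 0), max_eq_right (by linarith : c - y ≤ 0)]
      nlinarith
  have hTT : ∑ i, ∑ j, (if G.Adj i j then (1:ℝ) else 0) * (max (v i - c) 0 - max (v j - c) 0)^2
      + ∑ i, ∑ j, (if G.Adj i j then (1:ℝ) else 0) * (max (c - v i) 0 - max (c - v j) 0)^2
      ≤ ∑ i, ∑ j, (if G.Adj i j then (1:ℝ) else 0) * (v i - v j)^2 := by
    rw [← Finset.sum_add_distrib]
    refine Finset.sum_le_sum fun i _ => ?_
    rw [← Finset.sum_add_distrib]
    refine Finset.sum_le_sum fun j _ => ?_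
    have h0 : (0:ℝ) ≤ (if G.Adj i j then (1:ℝ) else 0) := by positivity
    rw [← mul_add]
    exact mul_le_mul_of_nonneg_left (hkey (v i) (v j)) h0
  -- sum of the two Rayleigh numerators
  have hgh : ∀ i, (G.degree i:ℝ) * (max (v i - c) 0)^2 + (G.degree i:ℝ) * (max (c - v i) 0)^2
      = (G.degree i:ℝ) * (v i - c)^2 := by
    intro i
    rcases le_total (v i) c with hx | hx
    · rw [max_eq_right (by linarith : v i - c ≤ 0), max_eq_left (by linarith : (0:ℝ) ≤ c - v i)]
      ring
    · rw [max_eq_left (by linarith : (0:ℝ) ≤ v i - c), max_eq_right (by linarith : c - v i ≤ 0)]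
      ring
  have hsum2 : α^2 * ∑ i, (G.degree i:ℝ) * (v i - c)^2
      ≤ ∑ i, ∑ j, (if G.Adj i j then (1:ℝ) else 0) * (v i - v j)^2 := by
    have he : ∑ i, (G.degree i:ℝ) * (v i - c)^2
        = (∑ i, (G.degree i:ℝ) * (max (v i - c) 0)^2)
          + ∑ i, (G.degree i:ℝ) * (max (c - v i) 0)^2 := by
      rw [← Finset.sum_add_distrib]
      exact Finset.sum_congr rfl fun i _ => (hgh i).symm
    rw [he, mul_add]
    calc α^2 * (∑ i, (G.degree i:ℝ) * (max (v i - c) 0)^2)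
          + α^2 * ∑ i, (G.degree i:ℝ) * (max (c - v i) 0)^2
        ≤ ∑ i, ∑ j, (if G.Adj i j then (1:ℝ) else 0) * (max (v i - c) 0 - max (v j - c) 0)^2
          + ∑ i, ∑ j, (if G.Adj i j then (1:ℝ) else 0) * (max (c - v i) 0 - max (c - v j) 0)^2 :=
          add_le_add hsw_g hsw_h
      _ ≤ _ := hTT
  -- degree lower bound and centering
  have hvsum : ∑ i, v i = 0 := by
    have := hv
    simp only [dotProduct, mul_one] at this
    exact this
  have hdegmin : (sInf {x | ∃ i : Fin n, x = (G.degree i : ℝ)}) * (∑ i, (v i - c)^2)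
      ≤ ∑ i, (G.degree i:ℝ) * (v i - c)^2 := by
    rw [Finset.mul_sum]
    exact Finset.sum_le_sum fun i _ =>
      mul_le_mul_of_nonneg_right (hdminle i) (sq_nonneg _)
  have hshift : ∑ i, (v i)^2 ≤ ∑ i, (v i - c)^2 := by
    have h1 : ∑ i, (v i - c)^2 = ∑ i, ((v i)^2 + (c^2 - 2*c*v i)) :=
      Finset.sum_congr rfl fun i _ => by ring
    rw [h1, Finset.sum_add_distrib]
    have h2 : ∑ i : Fin n, (c^2 - 2*c*v i) = (n:ℝ)*c^2 - 2*c*∑ i, v i := by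
      rw [Finset.sum_sub_distrib, Finset.sum_const, Finset.card_univ, Fintype.card_fin,
        nsmul_eq_mul, ← Finset.mul_sum]
    rw [h2, hvsum]
    have h3 : (0:ℝ) ≤ (n:ℝ)*c^2 := by positivity
    linarith
  -- final assembly
  have hvv : v ⬝ᵥ v = ∑ i, (v i)^2 := by
    simp only [dotProduct]
    exact Finset.sum_congr rfl fun i _ => (pow_two (v i)).symm
  have hvvpos : (0:ℝ) < v ⬝ᵥ v := by
    rw [hvv]
    obtain ⟨i, hi⟩ := Function.ne_iff.mp hvne
    have h1 : (0:ℝ) < (v i)^2 :=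
      lt_of_le_of_ne (sq_nonneg _) (Ne.symm (pow_ne_zero 2 hi))
    have h2 : (v i)^2 ≤ ∑ i, (v i)^2 :=
      Finset.single_le_sum (fun i _ => sq_nonneg (v i)) (Finset.mem_univ i)
    linarith
  rw [le_div_iff₀ hvvpos, quad G v, hvv]
  -- m * Σ v² ≤ 1/2 * T
  have hαdm : α^2 * (sInf {x | ∃ i : Fin n, x = (G.degree i : ℝ)}) = 2 * m := by
    rw [hα2, div_mul_cancel₀]
    exact ne_of_gt hdminpos
  have hchain : 2 * m * (∑ i, (v i)^2)
      ≤ ∑ i, ∑ j, (if G.Adj i j then (1:ℝ) else 0) * (v i - v j)^2 := by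
    calc 2 * m * (∑ i, (v i)^2)
        = α^2 * ((sInf {x | ∃ i : Fin n, x = (G.degree i : ℝ)}) * (∑ i, (v i)^2)) := by
          rw [← mul_assoc, hαdm]
      _ ≤ α^2 * ((sInf {x | ∃ i : Fin n, x = (G.degree i : ℝ)}) * (∑ i, (v i - c)^2)) := by
          refine mul_le_mul_of_nonneg_left ?_ (sq_nonneg α)
          exact mul_le_mul_of_nonneg_left hshift (le_of_lt hdminpos)
      _ ≤ α^2 * (∑ i, (G.degree i:ℝ) * (v i - c)^2) :=
          mul_le_mul_of_nonneg_left hdegmin (sq_nonneg α)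
      _ ≤ _ := hsum2
  linarith

end CheegerAux

theorem unweighted_cheeger_type_inequality
    (n : ℕ) (hn : 0 < n) (G : SimpleGraph (Fin n)) [DecidableRel G.Adj]
    (hconn : G.Connected) (hdmin : ∀ i, 1 ≤ G.degree i) :
    let L : Matrix (Fin n) (Fin n) ℝ :=
      Matrix.diagonal (fun i => (G.degree i : ℝ)) - G.adjMatrix ℝ
    let dS : Finset (Fin n) → ℝ := fun S => ∑ i ∈ S, (G.degree i : ℝ)
    let boundary : Finset (Fin n) → ℝ := fun S =>
      ∑ i ∈ S, ∑ j ∈ Sᶜ, (if G.Adj i j then (1:ℝ) else 0)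
    let dmin : ℝ := sInf {x | ∃ i : Fin n, x = (G.degree i : ℝ)}
    ∀ v : Fin n → ℝ, v ⬝ᵥ (fun _ => (1:ℝ)) = 0 → v ≠ 0 →
      sInf {x | ∃ S : Finset (Fin n), S.Nonempty ∧ S ≠ univ ∧ dS S ≤ dS univ / 2 ∧
          x = dmin * (boundary S)^2 / (2 * (dS S)^2)}
        ≤ v ⬝ᵥ (L *ᵥ v) / (v ⬝ᵥ v) := by
  intro L dS boundary dmin v hv hvne
  exact CheegerAux.main_aux n hn G hdmin v hv hvne
end

section
/- Let G = (V, E, w) be a signed weighted graph with Laplacian L and signed weighted edge expansion φ_G. If φ_G ≥ 0, then L is positive semidefinite. -/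
open Matrix Finset

/-- positive part of a weight matrix -/
def Wplus {n : ℕ} (W : Matrix (Fin n) (Fin n) ℝ) : Matrix (Fin n) (Fin n) ℝ :=
  fun i j => max (W i j) 0

/-- negative part of a weight matrix -/
def Wminus {n : ℕ} (W : Matrix (Fin n) (Fin n) ℝ) : Matrix (Fin n) (Fin n) ℝ :=
  fun i j => min (W i j) 0

/-- degree of a vertex -/
def deg {n : ℕ} (W : Matrix (Fin n) (Fin n) ℝ) (i : Fin n) : ℝ :=
  ∑ j ∈ univ.filter (· ≠ i), W i j

/-- positive degree of a vertex -/
def degPlus {n : ℕ} (W : Matrix (Fin n) (Fin n) ℝ) (i : Fin n) : ℝ :=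
  ∑ j ∈ univ.filter (· ≠ i), Wplus W i j

/-- positive degree of a set -/
def degPlusSet {n : ℕ} (W : Matrix (Fin n) (Fin n) ℝ) (S : Finset (Fin n)) : ℝ :=
  ∑ i ∈ S, degPlus W i

/-- positive boundary weight of a set -/
def wPlusBoundary {n : ℕ} (W : Matrix (Fin n) (Fin n) ℝ) (S : Finset (Fin n)) : ℝ :=
  ∑ i ∈ S, ∑ j ∈ Sᶜ, Wplus W i j

/-- negative boundary weight of a set -/
def wMinusBoundary {n : ℕ} (W : Matrix (Fin n) (Fin n) ℝ) (S : Finset (Fin n)) : ℝ :=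
  ∑ i ∈ S, ∑ j ∈ Sᶜ, Wminus W i j

/-- minimum positive degree -/
noncomputable def degPlusMin {n : ℕ} (W : Matrix (Fin n) (Fin n) ℝ) : ℝ :=
  sInf {x | ∃ i : Fin n, x = degPlus W i}

/-- signed weighted edge expansion of the graph with weight matrix `W` -/
noncomputable def phiG {n : ℕ} (W : Matrix (Fin n) (Fin n) ℝ) : ℝ :=
  (1/2) * degPlusMin W *
    sInf {x | ∃ S : Finset (Fin n), S.Nonempty ∧ S ≠ univ ∧
      degPlusSet W S ≤ degPlusSet W univ / 2 ∧
      x = (wPlusBoundary W S / degPlusSet W S)^2}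
  + 2 * sInf {x | ∃ S : Finset (Fin n), S.Nonempty ∧ S ≠ univ ∧ x = wMinusBoundary W S}

/-!
For `y : Fin n → ℝ` one has `2 yᵀ L y = ∑ i j, W i j (y i - y j)²`, which splits into the
contributions of `W⁺` and `W⁻`. Centre `y` at a median `c` for the positive degrees, so that both
`(y - c)⁺` and `(y - c)⁻` are supported on sets of at most half the positive volume.

Positive part (Cheeger): peeling off level sets gives the coarea inequality
`2 h ∑ d⁺ g ≤ ∑ w⁺ |g i - g j|` for `g ≥ 0` when every set inside the support of `g` has
expansion at least `h`; applied to `g = f²` and combined with Cauchy–Schwarz and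
`∑ w⁺ (f i + f j)² ≤ 4 ∑ d⁺ f²`, it yields `h² ∑ d⁺ f² ≤ ∑ w⁺ (f i - f j)²`. For the two halves
of `y - c` this bounds the positive part below by `α ∑ d⁺ (y - c)² ≥ α d⁺_min ∑ (y - c)²`,
where `α` is the squared conductance.

Negative part: `(y i - y j)² ≤ 2 (y i - c)² + 2 (y j - c)²` and `W⁻ ≤ 0` bound it below by
`4 ∑ d⁻ (y - c)²`, and the singleton cuts give `d⁻ i ≥ min_S w⁻(∂S)`.

Together, `2 yᵀ L y ≥ 2 φ_G ∑ (y - c)² ≥ 0`.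
-/

theorem sq_posPart_sub_add_sq_negPart_sub_le (a b : ℝ) :
    (a⁺ - b⁺) ^ 2 + (a⁻ - b⁻) ^ 2 ≤ (a - b) ^ 2 := by
  rcases le_total 0 a with ha | ha <;> rcases le_total 0 b with hb | hb <;>
    simp [ha, hb] <;> nlinarith

theorem posPart_sq_add_negPart_sq (a : ℝ) : a⁺ ^ 2 + a⁻ ^ 2 = a ^ 2 := by
  rcases le_total 0 a with ha | ha <;> simp [ha]

namespace Matrix

variable {ι : Type*} [Fintype ι] {w : Matrix ι ι ℝ}

theorem IsSymm.sum_sum_mul_add_swap (hw : w.IsSymm) (F : ι → ι → ℝ) :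
    ∑ i, ∑ j, w i j * (F i j + F j i) = 2 * ∑ i, ∑ j, w i j * F i j := by
  have hswap : ∑ i, ∑ j, w i j * F j i = ∑ i, ∑ j, w i j * F i j := by
    rw [Finset.sum_comm]
    exact Finset.sum_congr rfl fun i _ => Finset.sum_congr rfl fun j _ => by rw [hw.apply]
  simp only [mul_add, Finset.sum_add_distrib, hswap]
  ring

theorem IsSymm.sum_sum_mul_add (hw : w.IsSymm) (a : ι → ℝ) :
    ∑ i, ∑ j, w i j * (a i + a j) = 2 * ∑ i, (∑ j, w i j) * a i := by
  simp only [hw.sum_sum_mul_add_swap (fun i _ => a i), Finset.sum_mul]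

theorem IsSymm.two_mul_dotProduct_diagonal_sub_mulVec [DecidableEq ι] (hw : w.IsSymm)
    (x : ι → ℝ) :
    2 * (x ⬝ᵥ (diagonal (fun i => ∑ j, w i j) - w) *ᵥ x) = ∑ i, ∑ j, w i j * (x i - x j) ^ 2 := by
  have hexpand : ∀ i j, w i j * (x i - x j) ^ 2
      = w i j * (x i ^ 2 + x j ^ 2) - 2 * (x i * (w i j * x j)) := fun i j => by ring
  have hdiag : x ⬝ᵥ diagonal (fun i => ∑ j, w i j) *ᵥ x = ∑ i, (∑ j, w i j) * x i ^ 2 :=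
    Finset.sum_congr rfl fun i _ => by rw [mulVec_diagonal]; ring
  have hoff : x ⬝ᵥ w *ᵥ x = ∑ i, ∑ j, x i * (w i j * x j) :=
    Finset.sum_congr rfl fun i _ => Finset.mul_sum _ _ _
  simp only [hexpand, Finset.sum_sub_distrib, hw.sum_sum_mul_add, ← Finset.mul_sum, sub_mulVec,
    dotProduct_sub, hdiag, hoff]
  ring

theorem IsSymm.posSemidef_diagonal_sub [DecidableEq ι] (hw : w.IsSymm)
    (h : ∀ x : ι → ℝ, 0 ≤ ∑ i, ∑ j, w i j * (x i - x j) ^ 2) :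
    (diagonal (fun i => ∑ j, w i j) - w).PosSemidef := by
  refine .of_dotProduct_mulVec_nonneg ?_ fun x => ?_
  · rw [IsHermitian, conjTranspose_eq_transpose_of_trivial, transpose_sub, diagonal_transpose,
      hw.eq]
  · have := hw.two_mul_dotProduct_diagonal_sub_mulVec x
    rw [star_trivial]
    linarith [h x]

theorem IsSymm.sum_sum_mul_abs_sub_add_indicator [DecidableEq ι] (hw : w.IsSymm)
    {S : Finset ι} {h : ι → ℝ} (hh : ∀ i, 0 ≤ h i) (hS : ∀ i ∉ S, h i = 0) {t : ℝ} (ht : 0 ≤ t) :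
    ∑ i, ∑ j, w i j * |(h i + if i ∈ S then t else 0) - (h j + if j ∈ S then t else 0)|
      = ∑ i, ∑ j, w i j * |h i - h j| + 2 * t * ∑ i ∈ S, ∑ j ∈ Sᶜ, w i j := by
  set F : ι → ι → ℝ := fun i j => if i ∈ S then (if j ∈ Sᶜ then t else 0) else 0
  have hpt : ∀ i j, |(h i + if i ∈ S then t else 0) - (h j + if j ∈ S then t else 0)|
      = |h i - h j| + (F i j + F j i) := by
    intro i j
    by_cases hi : i ∈ S <;> by_cases hj : j ∈ S
    · simp [F, hi, hj]
    · simp [F, hi, hj, hS j hj, abs_of_nonneg (hh i), abs_of_nonneg (add_nonneg (hh i) ht)]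
    · rw [abs_sub_comm, abs_sub_comm (h i)]
      simp [F, hi, hj, hS i hi, abs_of_nonneg (hh j), abs_of_nonneg (add_nonneg (hh j) ht)]
    · simp [F, hi, hj, hS i hi, hS j hj]
  have hcut : ∑ i, ∑ j, w i j * F i j = t * ∑ i ∈ S, ∑ j ∈ Sᶜ, w i j := by
    simp only [F, mul_ite, mul_zero, Finset.sum_ite_irrel, Finset.sum_const_zero,
      Finset.sum_ite_mem, Finset.univ_inter, Finset.sum_mul, mul_comm t]
  have hswap := hw.sum_sum_mul_add_swap F
  simp only [hpt, mul_add, Finset.sum_add_distrib] at hswap ⊢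
  linarith

theorem IsSymm.two_mul_sum_mul_le_sum_abs_sub_of_cut [DecidableEq ι] (hw : w.IsSymm) (a : ℝ)
    (g : ι → ℝ) (hg : ∀ i, 0 ≤ g i)
    (hcut : ∀ S : Finset ι, S.Nonempty → (∀ i ∈ S, 0 < g i) →
      a * ∑ i ∈ S, ∑ j, w i j ≤ ∑ i ∈ S, ∑ j ∈ Sᶜ, w i j) :
    2 * a * ∑ i, (∑ j, w i j) * g i ≤ ∑ i, ∑ j, w i j * |g i - g j| := by
  induction hN : (Finset.univ.filter fun i => 0 < g i).card using Nat.strong_induction_on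
    generalizing g with
  | _ N ih =>
  set S := Finset.univ.filter fun i => 0 < g i
  have hS : ∀ i ∉ S, g i = 0 := fun i hi =>
    le_antisymm (not_lt.mp fun h => hi (by simp [S, h])) (hg i)
  rcases S.eq_empty_or_nonempty with hempty | hne
  · simp [fun i => hS i (hempty ▸ Finset.notMem_empty i)]
  obtain ⟨i₀, hi₀, hmin⟩ := S.exists_min_image g hne
  set t := g i₀
  have ht : 0 < t := (Finset.mem_filter.mp hi₀).2
  -- peel off the lowest level set `S` at height `t`
  set h : ι → ℝ := fun i => g i - if i ∈ S then t else 0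
  have hh : ∀ i, 0 ≤ h i := fun i => by
    by_cases hi : i ∈ S <;> simp [h, hi, hmin, hg]
  have hle : ∀ i, h i ≤ g i := fun i => sub_le_self _ (by split_ifs <;> linarith)
  have hhS : ∀ i ∉ S, h i = 0 := fun i hi => by simp [h, hi, hS i hi]
  have hsupp : Finset.univ.filter (fun i => 0 < h i) ⊆ S.erase i₀ := fun i hi => by
    have hpos : 0 < h i := (Finset.mem_filter.mp hi).2
    refine Finset.mem_erase.mpr ⟨?_, by_contra fun hiS => hpos.ne' (hhS i hiS)⟩
    rintro rfl
    simp [h, hi₀, t] at hpos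
  have hcard : (Finset.univ.filter fun i => 0 < h i).card < N :=
    hN ▸ (Finset.card_lt_card (Finset.ssubset_of_subset_of_ssubset hsupp
      (Finset.erase_ssubset hi₀)))
  have IH := ih _ hcard h hh
    (fun T hT hTpos => hcut T hT fun i hi => (hTpos i hi).trans_le (hle i)) rfl
  have hvol : ∑ i, (∑ j, w i j) * g i
      = ∑ i, (∑ j, w i j) * h i + t * ∑ i ∈ S, ∑ j, w i j := by
    simp only [h, mul_sub, mul_ite, mul_zero, Finset.sum_sub_distrib, Finset.sum_ite_mem,
      Finset.univ_inter, Finset.sum_mul, mul_comm t]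
    ring
  have hg_eq : ∀ i, g i = h i + if i ∈ S then t else 0 := fun i => by simp [h]
  calc 2 * a * ∑ i, (∑ j, w i j) * g i
      = 2 * a * ∑ i, (∑ j, w i j) * h i + 2 * t * (a * ∑ i ∈ S, ∑ j, w i j) := by
        rw [hvol]; ring
    _ ≤ ∑ i, ∑ j, w i j * |h i - h j| + 2 * t * ∑ i ∈ S, ∑ j ∈ Sᶜ, w i j := by
        gcongr
        exact hcut S hne fun i hi => (Finset.mem_filter.mp hi).2
    _ = ∑ i, ∑ j, w i j * |g i - g j| := by
        rw [← hw.sum_sum_mul_abs_sub_add_indicator hh hhS ht.le]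
        simp only [← hg_eq]

theorem sq_sum_mul_abs_sq_sub_sq_le (hw₀ : ∀ i j, 0 ≤ w i j) (f : ι → ℝ) :
    (∑ i, ∑ j, w i j * |f i ^ 2 - f j ^ 2|) ^ 2
      ≤ (∑ i, ∑ j, w i j * (f i - f j) ^ 2) * ∑ i, ∑ j, w i j * (f i + f j) ^ 2 := by
  simp only [← Fintype.sum_prod_type']
  refine Finset.sum_sq_le_sum_mul_sum_of_sq_le_mul _
    (fun p _ => mul_nonneg (hw₀ _ _) (sq_nonneg _)) (fun p _ => mul_nonneg (hw₀ _ _) (sq_nonneg _))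
    fun p _ => le_of_eq ?_
  rw [sq_sub_sq, abs_mul, mul_pow, mul_pow, sq_abs, sq_abs]
  ring

theorem IsSymm.sum_sum_mul_add_sq_le (hw₀ : ∀ i j, 0 ≤ w i j) (hw : w.IsSymm) (f : ι → ℝ) :
    ∑ i, ∑ j, w i j * (f i + f j) ^ 2 ≤ 4 * ∑ i, (∑ j, w i j) * f i ^ 2 := by
  calc ∑ i, ∑ j, w i j * (f i + f j) ^ 2
      ≤ ∑ i, ∑ j, w i j * (2 * f i ^ 2 + 2 * f j ^ 2) := by
        gcongr with i _ j _
        · exact hw₀ i j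
        · nlinarith [sq_nonneg (f i - f j)]
    _ = 4 * ∑ i, (∑ j, w i j) * f i ^ 2 := by
        rw [hw.sum_sum_mul_add (fun i => 2 * f i ^ 2)]
        simp only [Finset.mul_sum]
        ring_nf

theorem IsSymm.four_mul_sum_mul_sq_le_of_nonpos (hw₀ : ∀ i j, w i j ≤ 0) (hw : w.IsSymm)
    (u : ι → ℝ) :
    4 * ∑ i, (∑ j, w i j) * u i ^ 2 ≤ ∑ i, ∑ j, w i j * (u i - u j) ^ 2 := by
  calc 4 * ∑ i, (∑ j, w i j) * u i ^ 2
      = ∑ i, ∑ j, w i j * (2 * u i ^ 2 + 2 * u j ^ 2) := by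
        rw [hw.sum_sum_mul_add (fun i => 2 * u i ^ 2)]
        simp only [Finset.mul_sum]
        ring_nf
    _ ≤ ∑ i, ∑ j, w i j * (u i - u j) ^ 2 :=
        Finset.sum_le_sum fun i _ => Finset.sum_le_sum fun j _ =>
          mul_le_mul_of_nonpos_left (by nlinarith [sq_nonneg (u i + u j)]) (hw₀ i j)

theorem IsSymm.sq_mul_sum_mul_sq_le_of_cut [DecidableEq ι] (hw₀ : ∀ i j, 0 ≤ w i j)
    (hw : w.IsSymm) {a : ℝ} (ha : 0 ≤ a) (f : ι → ℝ) (hf : ∀ i, 0 ≤ f i)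
    (hcut : ∀ S : Finset ι, S.Nonempty → (∀ i ∈ S, 0 < f i) →
      a * ∑ i ∈ S, ∑ j, w i j ≤ ∑ i ∈ S, ∑ j ∈ Sᶜ, w i j) :
    a ^ 2 * ∑ i, (∑ j, w i j) * f i ^ 2 ≤ ∑ i, ∑ j, w i j * (f i - f j) ^ 2 := by
  set M := ∑ i, (∑ j, w i j) * f i ^ 2
  set P := ∑ i, ∑ j, w i j * (f i - f j) ^ 2
  have hM : 0 ≤ M := Finset.sum_nonneg fun i _ =>
    mul_nonneg (Finset.sum_nonneg fun j _ => hw₀ i j) (sq_nonneg _)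
  have hP : 0 ≤ P := Finset.sum_nonneg fun i _ => Finset.sum_nonneg fun j _ =>
    mul_nonneg (hw₀ i j) (sq_nonneg _)
  -- the coarea inequality for `f ^ 2`, then Cauchy–Schwarz against `(f i + f j) ^ 2`
  have hcoarea := hw.two_mul_sum_mul_le_sum_abs_sub_of_cut a (fun i => f i ^ 2)
    (fun i => sq_nonneg _) fun S hS hpos => hcut S hS fun i hi =>
      (hf i).lt_of_ne fun h => (hpos i hi).ne' (by simp [← h])
  have hCS := (sq_le_sq' (by nlinarith) hcoarea).trans
    ((sq_sum_mul_abs_sq_sub_sq_le hw₀ f).trans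
      (mul_le_mul_of_nonneg_left (hw.sum_sum_mul_add_sq_le hw₀ f) hP))
  rcases hM.eq_or_lt with hM0 | hMpos
  · rw [← hM0, mul_zero]
    exact hP
  · nlinarith

theorem sum_sum_mul_sq_posPart_sub_add_negPart_sub_le (hw₀ : ∀ i j, 0 ≤ w i j) (u : ι → ℝ) :
    ∑ i, ∑ j, w i j * ((u i)⁺ - (u j)⁺) ^ 2 + ∑ i, ∑ j, w i j * ((u i)⁻ - (u j)⁻) ^ 2
      ≤ ∑ i, ∑ j, w i j * (u i - u j) ^ 2 := by
  simp only [← Finset.sum_add_distrib, ← mul_add]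
  exact Finset.sum_le_sum fun i _ => Finset.sum_le_sum fun j _ =>
    mul_le_mul_of_nonneg_left (sq_posPart_sub_add_sq_negPart_sub_le _ _) (hw₀ i j)

end Matrix

theorem exists_weighted_median {ι : Type*} [Fintype ι] [Nonempty ι] (x d : ι → ℝ)
    (hd : ∀ i, 0 ≤ d i) :
    ∃ m, ∑ i ∈ univ.filter (fun i => x m < x i), d i ≤ (∑ i, d i) / 2 ∧
      ∑ i ∈ univ.filter (fun i => x i < x m), d i ≤ (∑ i, d i) / 2 := by
  have hD : 0 ≤ ∑ i, d i := sum_nonneg fun i _ => hd i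
  set F := univ.filter fun m => ∑ i ∈ univ.filter (fun i => x m < x i), d i ≤ (∑ i, d i) / 2
  obtain ⟨top, -, htop⟩ := univ.exists_max_image x univ_nonempty
  have hFne : F.Nonempty := ⟨top, mem_filter.mpr ⟨mem_univ _, by
    rw [filter_false_of_mem fun i _ => not_lt.mpr (htop i (mem_univ i)), sum_empty]
    linarith⟩⟩
  obtain ⟨m, hmF, hmin⟩ := F.exists_min_image x hFne
  refine ⟨m, (mem_filter.mp hmF).2, ?_⟩
  -- otherwise the largest value below `x m` would be a smaller point of `F`
  by_contra! hbelow
  set T := univ.filter fun i => x i < x m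
  obtain ⟨m', hm'T, hmax⟩ := T.exists_max_image x
    (nonempty_of_sum_ne_zero (by linarith : ∑ i ∈ T, d i ≠ 0))
  have hm' : x m' < x m := (mem_filter.mp hm'T).2
  have habove : univ.filter (fun i => x m' < x i) = univ.filter (fun i => ¬ x i < x m) := by
    ext i
    simp only [mem_filter, mem_univ, true_and, not_lt]
    exact ⟨fun h => not_lt.mp fun hi => not_lt.mpr (hmax i (mem_filter.mpr ⟨mem_univ _, hi⟩)) h,
      hm'.trans_le⟩
  have hm'F : m' ∈ F := mem_filter.mpr ⟨mem_univ _, by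
    rw [habove]
    linarith [sum_filter_add_sum_filter_not univ (fun i => x i < x m) d]⟩
  exact not_lt.mpr (hmin m' hm'F) hm'

section SignedGraph

variable {n : ℕ} (W : Matrix (Fin n) (Fin n) ℝ)

theorem deg_eq_sum (hdiag : ∀ i, W i i = 0) (i : Fin n) : deg W i = ∑ j, W i j := by
  rw [deg, filter_ne', sum_erase _ (hdiag i)]

theorem Wplus_nonneg (i j : Fin n) : 0 ≤ Wplus W i j := le_max_right _ _

theorem Wminus_nonpos (i j : Fin n) : Wminus W i j ≤ 0 := min_le_right _ _

theorem Wplus_add_Wminus (i j : Fin n) : Wplus W i j + Wminus W i j = W i j := by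
  rw [Wplus, Wminus, max_add_min, add_zero]

theorem isSymm_Wplus (hW : W.IsSymm) : (Wplus W).IsSymm :=
  IsSymm.ext fun i j => by unfold Wplus; rw [hW.apply]

theorem isSymm_Wminus (hW : W.IsSymm) : (Wminus W).IsSymm :=
  IsSymm.ext fun i j => by unfold Wminus; rw [hW.apply]

theorem Wplus_apply_self (hdiag : ∀ i, W i i = 0) (i : Fin n) : Wplus W i i = 0 := by
  simp [Wplus, hdiag]

theorem Wminus_apply_self (hdiag : ∀ i, W i i = 0) (i : Fin n) : Wminus W i i = 0 := by
  simp [Wminus, hdiag]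

theorem degPlus_eq_sum (hdiag : ∀ i, W i i = 0) (i : Fin n) : degPlus W i = ∑ j, Wplus W i j :=
  deg_eq_sum (Wplus W) (Wplus_apply_self W hdiag) i

theorem degPlus_nonneg (i : Fin n) : 0 ≤ degPlus W i :=
  sum_nonneg fun j _ => Wplus_nonneg W i j

theorem degPlusMin_le (i : Fin n) : degPlusMin W ≤ degPlus W i :=
  csInf_le ((Set.finite_range (degPlus W)).subset (by rintro _ ⟨j, rfl⟩; exact ⟨j, rfl⟩)).bddBelow
    ⟨i, rfl⟩

/-- The term `min (w⁺(∂S) / d⁺(S))²` of `phiG`. -/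
noncomputable def sqPlusConductance : ℝ :=
  sInf {x | ∃ S : Finset (Fin n), S.Nonempty ∧ S ≠ univ ∧
    degPlusSet W S ≤ degPlusSet W univ / 2 ∧ x = (wPlusBoundary W S / degPlusSet W S) ^ 2}

/-- The term `min w⁻(∂S)` of `phiG`. -/
noncomputable def minMinusCut : ℝ :=
  sInf {x | ∃ S : Finset (Fin n), S.Nonempty ∧ S ≠ univ ∧ x = wMinusBoundary W S}

theorem phiG_eq : phiG W = 1 / 2 * degPlusMin W * sqPlusConductance W + 2 * minMinusCut W := rfl

theorem sqPlusConductance_nonneg : 0 ≤ sqPlusConductance W :=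
  Real.sInf_nonneg (by rintro _ ⟨S, -, -, -, rfl⟩; positivity)

theorem sqrt_sqPlusConductance_mul_le {S : Finset (Fin n)} (hS : S.Nonempty) (hSu : S ≠ univ)
    (hhalf : degPlusSet W S ≤ degPlusSet W univ / 2) :
    √(sqPlusConductance W) * degPlusSet W S ≤ wPlusBoundary W S := by
  have hvol : 0 ≤ degPlusSet W S := sum_nonneg fun i _ => degPlus_nonneg W i
  have hcut : 0 ≤ wPlusBoundary W S :=
    sum_nonneg fun i _ => sum_nonneg fun j _ => Wplus_nonneg W i j
  have hle : sqPlusConductance W ≤ (wPlusBoundary W S / degPlusSet W S) ^ 2 :=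
    csInf_le ((Set.finite_range fun S => (wPlusBoundary W S / degPlusSet W S) ^ 2).subset
      (by rintro _ ⟨T, -, -, -, rfl⟩; exact ⟨T, rfl⟩)).bddBelow ⟨S, hS, hSu, hhalf, rfl⟩
  rcases hvol.eq_or_lt with hvol0 | hvolpos
  · rw [← hvol0, mul_zero]
    exact hcut
  · rw [← le_div_iff₀ hvolpos, Real.sqrt_le_left (div_nonneg hcut hvol)]
    exact hle

theorem minMinusCut_le_deg_Wminus (i : Fin n) : minMinusCut W ≤ deg (Wminus W) i := by
  by_cases hother : ∃ j, j ≠ i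
  · obtain ⟨j, hj⟩ := hother
    have hsingle : ({i} : Finset (Fin n)) ≠ univ := fun h =>
      hj (mem_singleton.mp (h ▸ mem_univ j))
    calc minMinusCut W ≤ wMinusBoundary W {i} :=
          csInf_le ((Set.finite_range (wMinusBoundary W)).subset
            (by rintro _ ⟨T, -, -, rfl⟩; exact ⟨T, rfl⟩)).bddBelow
            ⟨{i}, singleton_nonempty i, hsingle, rfl⟩
      _ = deg (Wminus W) i := by
          rw [wMinusBoundary, sum_singleton, deg, compl_singleton, filter_ne']
  · -- a single vertex: there is no proper cut, and `sInf ∅ = 0`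
    simp only [not_exists, not_not] at hother
    have hnone : {x | ∃ S : Finset (Fin n), S.Nonempty ∧ S ≠ univ ∧ x = wMinusBoundary W S} = ∅ :=
      Set.eq_empty_of_forall_notMem fun _ ⟨S, ⟨k, hk⟩, hSu, _⟩ =>
        hSu (eq_univ_of_forall fun j => (hother j).trans (hother k).symm ▸ hk)
    have hdeg : deg (Wminus W) i = 0 := by
      rw [deg, filter_false_of_mem fun j _ => not_not.mpr (hother j), sum_empty]
    rw [minMinusCut, hnone, Real.sInf_empty, hdeg]

theorem sqPlusConductance_mul_le_of_support_subset (hW : W.IsSymm) (hdiag : ∀ i, W i i = 0)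
    (f : Fin n → ℝ) (hf : ∀ i, 0 ≤ f i) {m : Fin n} (hm : f m = 0) (T : Finset (Fin n))
    (hT : ∀ i, 0 < f i → i ∈ T) (hhalf : degPlusSet W T ≤ degPlusSet W univ / 2) :
    sqPlusConductance W * ∑ i, degPlus W i * f i ^ 2
      ≤ ∑ i, ∑ j, Wplus W i j * (f i - f j) ^ 2 := by
  have key := (isSymm_Wplus W hW).sq_mul_sum_mul_sq_le_of_cut (Wplus_nonneg W)
    (Real.sqrt_nonneg (sqPlusConductance W)) f hf fun S hS hpos => by
      simp only [← degPlus_eq_sum W hdiag]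
      refine sqrt_sqPlusConductance_mul_le W hS (fun hSu => ?_) ?_
      · exact (hpos m (hSu ▸ mem_univ m)).ne' hm
      · exact (sum_le_sum_of_subset_of_nonneg (fun i hi => hT i (hpos i hi))
          fun i _ _ => degPlus_nonneg W i).trans hhalf
  rw [Real.sq_sqrt (sqPlusConductance_nonneg W)] at key
  simpa only [← degPlus_eq_sum W hdiag] using key

theorem sqPlusConductance_mul_sum_le (hW : W.IsSymm) (hdiag : ∀ i, W i i = 0)
    (y : Fin n → ℝ) (m : Fin n)
    (hup : ∑ i ∈ univ.filter (fun i => y m < y i), degPlus W i ≤ degPlusSet W univ / 2)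
    (hdown : ∑ i ∈ univ.filter (fun i => y i < y m), degPlus W i ≤ degPlusSet W univ / 2) :
    sqPlusConductance W * ∑ i, degPlus W i * (y i - y m) ^ 2
      ≤ ∑ i, ∑ j, Wplus W i j * (y i - y j) ^ 2 := by
  set u : Fin n → ℝ := fun i => y i - y m
  have hp := sqPlusConductance_mul_le_of_support_subset W hW hdiag (fun i => (u i)⁺)
    (fun i => posPart_nonneg _) (m := m) (by simp [u]) _ (fun i hi => by simpa [u] using hi) hup
  have hq := sqPlusConductance_mul_le_of_support_subset W hW hdiag (fun i => (u i)⁻)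
    (fun i => negPart_nonneg _) (m := m) (by simp [u]) _ (fun i hi => by simpa [u] using hi) hdown
  have hsplit := sum_sum_mul_sq_posPart_sub_add_negPart_sub_le (Wplus_nonneg W) u
  have hsq : ∑ i, degPlus W i * (u i) ^ 2
      = ∑ i, degPlus W i * (u i)⁺ ^ 2 + ∑ i, degPlus W i * (u i)⁻ ^ 2 := by
    simp only [← sum_add_distrib, ← mul_add, posPart_sq_add_negPart_sq]
  simp only [u, sub_sub_sub_cancel_right] at hsplit hsq
  rw [hsq, mul_add]
  linarith

theorem four_mul_minMinusCut_mul_le (hW : W.IsSymm) (hdiag : ∀ i, W i i = 0) (y : Fin n → ℝ)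
    (c : ℝ) :
    4 * minMinusCut W * ∑ i, (y i - c) ^ 2 ≤ ∑ i, ∑ j, Wminus W i j * (y i - y j) ^ 2 := by
  have hneg := (isSymm_Wminus W hW).four_mul_sum_mul_sq_le_of_nonpos (Wminus_nonpos W)
    fun i => y i - c
  simp only [sub_sub_sub_cancel_right, ← deg_eq_sum (Wminus W) (Wminus_apply_self W hdiag)]
    at hneg
  refine le_trans ?_ hneg
  rw [mul_assoc, mul_sum]
  gcongr with i
  exact minMinusCut_le_deg_Wminus W i

end SignedGraph

theorem nonneg_edge_expansion_implies_psd
    (n : ℕ) (hn : 0 < n) (W : Matrix (Fin n) (Fin n) ℝ)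
    (hsymm : W.IsSymm) (hdiag : ∀ i, W i i = 0)
    (hphi : 0 ≤ phiG W) :
    (Matrix.diagonal (deg W) - W).PosSemidef := by
  rw [funext (deg_eq_sum W hdiag)]
  refine hsymm.posSemidef_diagonal_sub fun y => ?_
  have : Nonempty (Fin n) := ⟨⟨0, hn⟩⟩
  obtain ⟨m, hup, hdown⟩ := exists_weighted_median y (degPlus W) (degPlus_nonneg W)
  set E := ∑ i, (y i - y m) ^ 2
  have hpos := sqPlusConductance_mul_sum_le W hsymm hdiag y m hup hdown
  have hneg := four_mul_minMinusCut_mul_le W hsymm hdiag y (y m)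
  have hdegPlus : sqPlusConductance W * (degPlusMin W * E)
      ≤ sqPlusConductance W * ∑ i, degPlus W i * (y i - y m) ^ 2 := by
    rw [mul_sum]
    gcongr with i
    · exact sqPlusConductance_nonneg W
    · exact degPlusMin_le W i
  have hsplit : ∑ i, ∑ j, W i j * (y i - y j) ^ 2
      = ∑ i, ∑ j, Wplus W i j * (y i - y j) ^ 2 + ∑ i, ∑ j, Wminus W i j * (y i - y j) ^ 2 := by
    simp only [← Wplus_add_Wminus W, add_mul, sum_add_distrib]
  have hphiE : 0 ≤ (sqPlusConductance W * degPlusMin W + 4 * minMinusCut W) * E :=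
    mul_nonneg (by rw [phiG_eq] at hphi; linarith) (sum_nonneg fun i _ => sq_nonneg _)
  linarith
end
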